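/- arXiv:2411.13062 — 5 statements merged into one kernel-verified Lean document; each statement's English description precedes it below -/
import Mathlib

section
/- Let f be a finite simple graph with k = |V(f)| vertices, g a finite simple graph with |V(g)| ≥ k vertices, and α : V(g) → [0, ∞) a node-weight with |α| := Σ_{v ∈ V(g)} α(v) > 0. Then |ρ(f,(g,α)) − ρ_inj(f,(g,α))| ≤ binom(k,2) · α_max / |α|, where α_max = max_{v ∈ V(g)} α(v). -/
open MeasureTheory Filter Topology
open scoped Classical

namespace EpsCLT

/-- Two subsets of `Fin p` (typically blocks of a partition) *cross* if there exist
`i < k < j < l` with `i, j` in one of them and `k, l` in the other. -/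
def Crosses {p : ℕ} (B₁ B₂ : Finset (Fin p)) : Prop :=
  ∃ i k j l : Fin p, i < k ∧ k < j ∧ j < l ∧
    ((i ∈ B₁ ∧ j ∈ B₁ ∧ k ∈ B₂ ∧ l ∈ B₂) ∨ (i ∈ B₂ ∧ j ∈ B₂ ∧ k ∈ B₁ ∧ l ∈ B₁))

theorem Crosses.symm {p : ℕ} {B₁ B₂ : Finset (Fin p)} (h : Crosses B₁ B₂) : Crosses B₂ B₁ := by
  obtain ⟨i, k, j, l, h1, h2, h3, h4⟩ := h
  exact ⟨i, k, j, l, h1, h2, h3, h4.symm⟩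

/-- `P` is a pair partition of `Fin p`: every block has two elements and every point lies in
exactly one block. -/
def IsPairPartition {p : ℕ} (P : Finset (Finset (Fin p))) : Prop :=
  (∀ B ∈ P, B.card = 2) ∧ ∀ i : Fin p, ∃! B, B ∈ P ∧ i ∈ B

/-- `P` is a partition of `Fin p`: blocks are nonempty and every point lies in exactly one. -/
def IsPartition {p : ℕ} (P : Finset (Finset (Fin p))) : Prop :=
  (∀ B ∈ P, B.Nonempty) ∧ ∀ i : Fin p, ∃! B, B ∈ P ∧ i ∈ B

/-- A partition is noncrossing if no two (distinct) blocks cross. -/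
def IsNoncrossing {p : ℕ} (P : Finset (Finset (Fin p))) : Prop :=
  ∀ B₁ ∈ P, ∀ B₂ ∈ P, B₁ ≠ B₂ → ¬ Crosses B₁ B₂

/-- The intersection graph `f_π` of a partition: vertices are the blocks, with an edge between
two blocks iff they cross. -/
def interGraph {p : ℕ} (P : Finset (Finset (Fin p))) : SimpleGraph {B // B ∈ P} where
  Adj B₁ B₂ := B₁ ≠ B₂ ∧ Crosses B₁.1 B₂.1
  symm := ⟨fun _ _ h => ⟨Ne.symm h.1, h.2.symm⟩⟩
  loopless := ⟨fun _ h => h.1 rfl⟩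

/-- Product over the edges of a graph (each edge counted once) of a symmetric function of the
endpoints.  The function is symmetrized, so for symmetric `F` each factor is `F u v`. -/
noncomputable def edgeProd {V : Type*} [Fintype V] (f : SimpleGraph V) (F : V → V → ℝ) : ℝ :=
  ∏ e ∈ f.edgeFinset, Sym2.lift ⟨fun u v => (F u v + F v u) / 2, fun u v => by ring⟩ e

/-- Homomorphism density `ρ(f, w)` of a finite simple graph in a graphon `w`. -/
noncomputable def density {V : Type*} [Fintype V] (f : SimpleGraph V) (w : ℝ → ℝ → ℝ) : ℝ :=
  ∫ x in Set.univ.pi (fun _ : V => Set.Icc (0:ℝ) 1), edgeProd f (fun u v => w (x u) (x v))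

/-- The step function of an `n × n` matrix: on the box `[(i-1)/n, i/n) × [(j-1)/n, j/n)`
(0-indexed: `[i/n, (i+1)/n) × [j/n, (j+1)/n)`) it takes the value `Q i j`. -/
noncomputable def stepFn {n : ℕ} (Q : Fin n → Fin n → ℝ) (x y : ℝ) : ℝ :=
  if hx : (⌊x * n⌋).toNat < n ∧ (⌊y * n⌋).toNat < n ∧ 0 ≤ x ∧ 0 ≤ y then
    Q ⟨(⌊x * n⌋).toNat, hx.1⟩ ⟨(⌊y * n⌋).toNat, hx.2.1⟩
  else 0

/-- The step graphon `w_g` of a finite simple graph on `[n]`. -/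
noncomputable def stepGraphon {n : ℕ} (g : SimpleGraph (Fin n)) : ℝ → ℝ → ℝ :=
  stepFn (fun i j => if g.Adj i j then 1 else 0)

/-- The finset of all pair partitions of `Fin p`. -/
noncomputable def pairPartitions (p : ℕ) : Finset (Finset (Finset (Fin p))) :=
  Finset.univ.filter IsPairPartition

/-- `Σ_{π ∈ P₂(p)} ρ(f_π, w)`, the `p`-th moment of the limit law `μ_w`. -/
noncomputable def momentFormula (p : ℕ) (w : ℝ → ℝ → ℝ) : ℝ :=
  ∑ P ∈ pairPartitions p, density (interGraph P) w

/-- `g`-independence (ε-independence) of a family of unital subalgebras with respect to a state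
`τ`, following Młotkowski and Speicher–Wysoczański. -/
def GIndep {A : Type*} [Ring A] [Algebra ℂ A] (τ : A →ₗ[ℂ] ℂ) {ι : Type*}
    (g : SimpleGraph ι) (B : ι → Subalgebra ℂ A) : Prop :=
  (∀ i j : ι, g.Adj i j →
      ∀ a ∈ B i, ∀ b ∈ B j, a * b = b * a ∧ τ (a * b) = τ a * τ b) ∧
  (∀ (k : ℕ) (idx : Fin k → ι),
      (∀ j₁ j₂ : Fin k, j₁ < j₂ → idx j₁ = idx j₂ →
        ∃ j₃, j₁ < j₃ ∧ j₃ < j₂ ∧ ¬ g.Adj (idx j₁) (idx j₃)) →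
      ∀ a : Fin k → A, (∀ j, a j ∈ B (idx j)) → (∀ j, τ (a j) = 0) →
        τ (List.ofFn a).prod = 0)

/-- The finset of graph homomorphisms from `f` to `g`. -/
noncomputable def homFinset {V W : Type*} [Fintype V] [Fintype W] (f : SimpleGraph V)
    (g : SimpleGraph W) : Finset (V → W) :=
  Finset.univ.filter fun φ => ∀ u v, f.Adj u v → g.Adj (φ u) (φ v)

/-- The finset of injective graph homomorphisms from `f` to `g`. -/
noncomputable def injHomFinset {V W : Type*} [Fintype V] [Fintype W] (f : SimpleGraph V)
    (g : SimpleGraph W) : Finset (V → W) :=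
  Finset.univ.filter fun φ => Function.Injective φ ∧ ∀ u v, f.Adj u v → g.Adj (φ u) (φ v)

/-- The number of graph homomorphisms `hom(f, g)`. -/
noncomputable def homCount {V W : Type*} [Fintype V] [Fintype W] (f : SimpleGraph V)
    (g : SimpleGraph W) : ℕ := (homFinset f g).card

/-- Weighted homomorphism density `ρ(f, (g, α))` of `f` in a node-weighted graph `(g, α)`. -/
noncomputable def wHomDensity {V W : Type*} [Fintype V] [Fintype W] (f : SimpleGraph V)
    (g : SimpleGraph W) (α : W → ℝ) : ℝ :=
  (∑ φ ∈ homFinset f g, ∏ v : V, α (φ v)) / (∑ v : W, α v) ^ (Fintype.card V)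

/-- Weighted injective homomorphism density `ρ_inj(f, (g, α))`. -/
noncomputable def wInjHomDensity {V W : Type*} [Fintype V] [Fintype W] (f : SimpleGraph V)
    (g : SimpleGraph W) (α : W → ℝ) : ℝ :=
  (∑ φ ∈ injHomFinset f g, ∏ v : V, α (φ v)) / (∑ v : W, α v) ^ (Fintype.card V)

/-!
A non-injective map `φ : V → W` identifies some pair `u ≠ v`, so the excess of `ρ` over `ρ_inj`
is at most the sum over the `C(k,2)` pairs of the `α`-weight of the maps with `φ u = φ v`.
For such maps `φ u` is determined by the restriction of `φ` to `V ∖ {u}`, so that weight is at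
most `α_max · |α|^(k-1)`; dividing by `|α|^k` gives the bound.
-/

theorem _root_.Finset.sum_le_sum_sum_filter_of_forall_exists {ι κ R : Type*} [Fintype κ]
    [AddCommMonoid R] [PartialOrder R] [IsOrderedAddMonoid R] {s : Finset ι} {F : ι → R}
    (hF : ∀ i, 0 ≤ F i) {P : κ → ι → Prop} [∀ k, DecidablePred (P k)]
    (hP : ∀ i ∈ s, ∃ k, P k i) :
    ∑ i ∈ s, F i ≤ ∑ k, ∑ i ∈ s.filter (P k), F i := by
  simp_rw [Finset.sum_filter]
  rw [Finset.sum_comm]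
  refine Finset.sum_le_sum fun i hi => ?_
  obtain ⟨k, hk⟩ := hP i hi
  calc F i = if P k i then F i else 0 := (if_pos hk).symm
    _ ≤ ∑ k, if P k i then F i else 0 :=
      Finset.single_le_sum (f := fun k => if P k i then F i else 0)
        (fun _ _ => ite_nonneg (hF i) le_rfl) (Finset.mem_univ k)

section Weights

variable {V W R : Type*} [Fintype V] [Fintype W] [CommSemiring R] [PartialOrder R]
  [IsOrderedRing R] {α : W → R} {M : R}

theorem sum_prod_filter_apply_eq_apply_le (hα : ∀ x, 0 ≤ α x) (hM : ∀ x, α x ≤ M)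
    {u v : V} (huv : u ≠ v) :
    ∑ φ ∈ Finset.univ.filter (fun φ : V → W => φ u = φ v), ∏ w, α (φ w) ≤
      M * (∑ x, α x) ^ (Fintype.card V - 1) := by
  classical
  set v' : {j // j ≠ u} := ⟨v, huv.symm⟩
  calc ∑ φ ∈ Finset.univ.filter (fun φ : V → W => φ u = φ v), ∏ w, α (φ w)
      = ∑ ψ : {j // j ≠ u} → W, α (ψ v') * ∏ j, α (ψ j) := by
        rw [Finset.sum_filter, ← (Equiv.funSplitAt u W).symm.sum_comp, Fintype.sum_prod_type,
          Finset.sum_comm]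
        refine Finset.sum_congr rfl fun ψ _ => ?_
        simp [Fintype.prod_eq_mul_prod_subtype_ne _ u, huv.symm, v', fun j : {j // j ≠ u} => j.2]
    _ ≤ ∑ ψ : {j // j ≠ u} → W, M * ∏ j, α (ψ j) :=
        Finset.sum_le_sum fun ψ _ =>
          mul_le_mul_of_nonneg_right (hM _) (Finset.prod_nonneg fun j _ => hα _)
    _ = M * (∑ x, α x) ^ (Fintype.card V - 1) := by
        rw [← Finset.mul_sum, ← Fintype.prod_sum, Finset.prod_const, Finset.card_univ,
          Fintype.card_subtype_compl, Fintype.card_subtype_eq]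

theorem sum_prod_le_of_forall_not_injective (hα : ∀ x, 0 ≤ α x) (hM : ∀ x, α x ≤ M)
    {s : Finset (V → W)} (hs : ∀ φ ∈ s, ¬ Function.Injective φ) :
    ∑ φ ∈ s, ∏ w, α (φ w) ≤
      (Fintype.card V).choose 2 * (M * (∑ x, α x) ^ (Fintype.card V - 1)) := by
  have hweight : ∀ φ : V → W, 0 ≤ ∏ w, α (φ w) := fun φ => Finset.prod_nonneg fun w _ => hα _
  calc ∑ φ ∈ s, ∏ w, α (φ w)
      ≤ ∑ z : {z : Sym2 V // ¬ z.IsDiag},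
          ∑ φ ∈ s.filter (fun φ => (z.1.map φ).IsDiag), ∏ w, α (φ w) :=
        Finset.sum_le_sum_sum_filter_of_forall_exists hweight fun φ hφ => by
          obtain ⟨a, b, hab, hne⟩ := Function.not_injective_iff.mp (hs φ hφ)
          exact ⟨⟨s(a, b), by simpa using hne⟩, by simpa using hab⟩
    _ ≤ ∑ _z : {z : Sym2 V // ¬ z.IsDiag}, M * (∑ x, α x) ^ (Fintype.card V - 1) := by
        refine Finset.sum_le_sum fun ⟨z, hz⟩ _ => ?_
        induction z using Sym2.ind with
        | h u v =>
          refine le_trans (Finset.sum_le_sum_of_subset_of_nonneg ?_ fun φ _ _ => hweight φ)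
            (sum_prod_filter_apply_eq_apply_le hα hM (by simpa using hz))
          intro φ
          simp
    _ = (Fintype.card V).choose 2 * (M * (∑ x, α x) ^ (Fintype.card V - 1)) := by
        rw [Finset.sum_const, Finset.card_univ, Sym2.card_subtype_not_diag, nsmul_eq_mul]

end Weights

theorem mul_pow_sub_one_div_pow {K : Type*} [Field K] {k : ℕ} (hk : k ≠ 0) (a S : K) :
    a * S ^ (k - 1) / S ^ k = a / S := by
  rcases eq_or_ne S 0 with rfl | hS
  · simp [hk]
  · rw [← mul_pow_sub_one hk, mul_div_mul_right _ _ (pow_ne_zero _ hS)]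

theorem injHomFinset_subset_homFinset {V W : Type*} [Fintype V] [Fintype W]
    (f : SimpleGraph V) (g : SimpleGraph W) : injHomFinset f g ⊆ homFinset f g :=
  fun _ hφ => Finset.mem_filter.mpr ⟨Finset.mem_univ _, (Finset.mem_filter.mp hφ).2.2⟩

theorem not_injective_of_mem_homFinset_sdiff {V W : Type*} [Fintype V] [Fintype W]
    {f : SimpleGraph V} {g : SimpleGraph W} {φ : V → W}
    (hφ : φ ∈ homFinset f g \ injHomFinset f g) : ¬ Function.Injective φ := fun hinj => by
  obtain ⟨hhom, hninj⟩ := Finset.mem_sdiff.mp hφ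
  exact hninj (Finset.mem_filter.mpr ⟨Finset.mem_univ _, hinj, (Finset.mem_filter.mp hhom).2⟩)

theorem wHomDensity_sub_wInjHomDensity {V W : Type*} [Fintype V] [Fintype W]
    (f : SimpleGraph V) (g : SimpleGraph W) (α : W → ℝ) :
    wHomDensity f g α - wInjHomDensity f g α =
      (∑ φ ∈ homFinset f g \ injHomFinset f g, ∏ v, α (φ v)) /
        (∑ v, α v) ^ Fintype.card V := by
  rw [wHomDensity, wInjHomDensity, div_sub_div_same,
    ← Finset.sum_sdiff (injHomFinset_subset_homFinset f g), add_sub_cancel_right]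

theorem wHomDensity_sub_wInjHomDensity_abs_le_general
    {V W : Type*} [Fintype V] [Fintype W] [Nonempty W]
    (f : SimpleGraph V) (g : SimpleGraph W)
    (α : W → ℝ) (hα : ∀ v, 0 ≤ α v) :
    |wHomDensity f g α - wInjHomDensity f g α| ≤
      ((Fintype.card V).choose 2 : ℝ) * (Finset.univ.sup' Finset.univ_nonempty α) /
        (∑ v : W, α v) := by
  set S := ∑ v : W, α v
  set M := Finset.univ.sup' Finset.univ_nonempty α
  set k := Fintype.card V
  have hS : 0 ≤ S := Finset.sum_nonneg fun v _ => hα v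
  have hM : ∀ x, α x ≤ M := fun x => Finset.le_sup' α (Finset.mem_univ x)
  have hcollisions := sum_prod_le_of_forall_not_injective hα hM
    fun _ => not_injective_of_mem_homFinset_sdiff (f := f) (g := g)
  have hD : 0 ≤ ∑ φ ∈ homFinset f g \ injHomFinset f g, ∏ v, α (φ v) :=
    Finset.sum_nonneg fun φ _ => Finset.prod_nonneg fun v _ => hα _
  rw [wHomDensity_sub_wInjHomDensity, abs_of_nonneg (div_nonneg hD (pow_nonneg hS k))]
  calc _ ≤ k.choose 2 * (M * S ^ (k - 1)) / S ^ k :=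
        div_le_div_of_nonneg_right hcollisions (pow_nonneg hS k)
    _ = k.choose 2 * M / S := by
        rcases eq_or_ne k 0 with hk | hk
        · simp [hk]
        · rw [← mul_assoc, mul_pow_sub_one_div_pow hk]

/-- **Lemma 4.2.**  For a node-weighted graph `(g, α)` with `|V(g)| ≥ |V(f)|`, the weighted
homomorphism density and its injective version differ by at most `C(k,2)·α_max/|α|`. -/
theorem wHomDensity_sub_wInjHomDensity_abs_le
    {V W : Type*} [Fintype V] [Fintype W] [Nonempty W]
    (f : SimpleGraph V) (g : SimpleGraph W)
    (α : W → ℝ) (hα : ∀ v, 0 ≤ α v)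
    (hcard : Fintype.card V ≤ Fintype.card W)
    (hsum : 0 < ∑ v : W, α v) :
    |wHomDensity f g α - wInjHomDensity f g α| ≤
      ((Fintype.card V).choose 2 : ℝ) * (Finset.univ.sup' Finset.univ_nonempty α) /
        (∑ v : W, α v) :=
  wHomDensity_sub_wInjHomDensity_abs_le_general f g α hα

end EpsCLT
end

section
/- Let (Q_n)_{n≥1} be symmetric n×n matrices with entries in [−1,1] and assume the step graphons w_{Q_n} converge to a symmetric measurable w : [0,1]² → [−1,1] (i.e. ρ(f, w_{Q_n}) → ρ(f, w) for every finite simple graph f). For each n, let s_1, …, s_n be a mixed q-Gaussian system with matrix Q_n in a noncommutative probability space (A, τ), and set S_n = n^{−1/2} Σ_{k=1}^n s_k. Then for every p ∈ ℕ, τ(S_n^p) → Σ_{π ∈ P_2(p)} ρ(f_π, w) as n → ∞; in particular the limiting odd moments vanish. -/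
/-!
Expanding `S_n^p` multilinearly and inserting the mixed `q`-Gaussian moment formula writes
`τ(S_n^p)` as a sum over pair partitions `π` of sums over index tuples constant on the blocks
of `π`. Such tuples are labellings of the `p/2` blocks by `[n]`, and since the step graphon
`w_{Q_n}` is constant on the cells `[k/n, (k+1)/n)^2`, the normalised sum
`n^{-p/2} Σ ∏_{U,V crossing} q_{i_U i_V}` is exactly `ρ(f_π, w_{Q_n})`. Graphon convergence
then gives the limit, and for odd `p` there are no pair partitions at all.
-/

open MeasureTheory Filter Topology
open scoped Classical

namespace EpsCLT

section StepFunction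

open Set

variable {n : ℕ}

def cell (k : Fin n) : Set ℝ := Ico ((k : ℝ) / n) (((k : ℝ) + 1) / n)

lemma mem_cell_iff (k : Fin n) {x : ℝ} : x ∈ cell k ↔ ⌊x * n⌋ = (k : ℤ) := by
  have hn : (0 : ℝ) < n := by exact_mod_cast k.pos
  rw [cell, mem_Ico, div_le_iff₀ hn, lt_div_iff₀ hn, Int.floor_eq_iff]
  push_cast
  rfl

lemma toNat_floor_mul_of_mem_cell {k : Fin n} {x : ℝ} (hx : x ∈ cell k) :
    (⌊x * n⌋).toNat = k := by
  rw [(mem_cell_iff k).1 hx, Int.toNat_natCast]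

lemma stepFn_eq_of_mem_cell (Q : Fin n → Fin n → ℝ) {k l : Fin n} {x y : ℝ}
    (hx : x ∈ cell k) (hy : y ∈ cell l) : stepFn Q x y = Q k l := by
  have hn : (0 : ℝ) < n := by exact_mod_cast k.pos
  have hkx := toNat_floor_mul_of_mem_cell hx
  have hly := toNat_floor_mul_of_mem_cell hy
  have h0x : 0 ≤ x := le_trans (by positivity) hx.1
  have h0y : 0 ≤ y := le_trans (by positivity) hy.1
  rw [stepFn, dif_pos ⟨hkx ▸ k.2, hly ▸ l.2, h0x, h0y⟩]
  congr 1 <;> exact Fin.ext ‹_›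

lemma pairwise_disjoint_cell : Pairwise fun k l : Fin n => Disjoint (cell k) (cell l) := by
  intro k l hkl
  refine disjoint_left.2 fun x hk hl => hkl (Fin.ext ?_)
  exact_mod_cast ((mem_cell_iff k).1 hk).symm.trans ((mem_cell_iff l).1 hl)

lemma iUnion_cell (hn : 0 < n) : ⋃ k : Fin n, cell k = Ico (0 : ℝ) 1 := by
  have hn' : (0 : ℝ) < n := by exact_mod_cast hn
  ext x
  simp only [mem_iUnion]
  constructor
  · rintro ⟨k, hk₁, hk₂⟩
    refine ⟨le_trans (by positivity) hk₁, hk₂.trans_le ?_⟩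
    rw [div_le_one hn']
    exact_mod_cast k.2
  · rintro ⟨h0, h1⟩
    have hnn : 0 ≤ ⌊x * n⌋ := Int.floor_nonneg.2 (by positivity)
    have hlt : ⌊x * n⌋ < n := Int.floor_lt.2 (by push_cast; nlinarith)
    refine ⟨⟨(⌊x * n⌋).toNat, by omega⟩, (mem_cell_iff _).2 ?_⟩
    simp [hnn]

end StepFunction

section StepDensity

open Set

variable {V : Type*} {n : ℕ}

def box (φ : V → Fin n) : Set (V → ℝ) := univ.pi fun v => cell (φ v)

lemma measurableSet_box [Countable V] (φ : V → Fin n) : MeasurableSet (box φ) :=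
  MeasurableSet.univ_pi fun _ => measurableSet_Ico

lemma volume_cell (k : Fin n) : volume (cell k) = ENNReal.ofReal (1 / n) := by
  rw [cell, Real.volume_Ico]
  congr 1
  ring

lemma volume_box [Fintype V] (φ : V → Fin n) :
    volume (box φ) = ENNReal.ofReal (1 / n) ^ Fintype.card V := by
  simp [box, volume_pi_pi, volume_cell]

lemma pairwise_disjoint_box : Pairwise fun φ ψ : V → Fin n => Disjoint (box φ) (box ψ) := by
  intro φ ψ h
  obtain ⟨v, hv⟩ := Function.ne_iff.1 h
  exact disjoint_univ_pi.2 ⟨v, pairwise_disjoint_cell hv⟩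

lemma iUnion_box (hn : 0 < n) : ⋃ φ : V → Fin n, box φ = univ.pi fun _ => Ico (0 : ℝ) 1 := by
  simp only [box, iUnion_univ_pi, iUnion_cell hn]

lemma edgeProd_stepFn_of_mem_box [Fintype V] (f : SimpleGraph V) (Q : Fin n → Fin n → ℝ)
    {φ : V → Fin n} {x : V → ℝ} (hx : x ∈ box φ) :
    edgeProd f (fun u v => stepFn Q (x u) (x v)) = edgeProd f (fun u v => Q (φ u) (φ v)) := by
  congr 1
  funext u v
  exact stepFn_eq_of_mem_cell Q (hx u trivial) (hx v trivial)

lemma density_stepFn [Fintype V] [DecidableEq V] (f : SimpleGraph V) (hn : 0 < n)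
    (Q : Fin n → Fin n → ℝ) :
    density f (stepFn Q) =
      (1 / n : ℝ) ^ Fintype.card V * ∑ φ : V → Fin n, edgeProd f (fun u v => Q (φ u) (φ v)) := by
  have hIco : (univ.pi fun _ : V => Icc (0 : ℝ) 1) =ᵐ[volume] univ.pi fun _ => Ico 0 1 :=
    Measure.pi_Ico_ae_eq_pi_Icc.symm
  have hconst : ∀ φ : V → Fin n, EqOn (fun x => edgeProd f (fun u v => stepFn Q (x u) (x v)))
      (fun _ => edgeProd f (fun u v => Q (φ u) (φ v))) (box φ) :=
    fun φ x hx => edgeProd_stepFn_of_mem_box f Q hx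
  have hint : ∀ φ : V → Fin n,
      IntegrableOn (fun x => edgeProd f (fun u v => stepFn Q (x u) (x v))) (box φ) :=
    fun φ => (integrableOn_const (by simp [volume_box])).congr_fun (hconst φ).symm
      (measurableSet_box φ)
  rw [density, setIntegral_congr_set hIco, ← iUnion_box hn,
    integral_iUnion_fintype measurableSet_box pairwise_disjoint_box hint, Finset.mul_sum]
  refine Finset.sum_congr rfl fun φ _ => ?_
  rw [setIntegral_congr_fun (measurableSet_box φ) (hconst φ), setIntegral_const, smul_eq_mul,
    measureReal_def, volume_box, ENNReal.toReal_pow, ENNReal.toReal_ofReal (by positivity)]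

end StepDensity

section Relabel

variable {W V : Type*} [Fintype W] [Fintype V]

lemma edgeProd_comap (e : W ≃ V) (f : SimpleGraph V) (F : W → W → ℝ) :
    edgeProd (f.comap e) F = edgeProd f (fun u v => F (e.symm u) (e.symm v)) := by
  refine Finset.prod_nbij' (Sym2.map e) (Sym2.map e.symm) ?_ ?_ ?_ ?_ ?_ <;>
    intro d _ <;> induction d <;> simp_all

lemma density_comap (e : W ≃ V) (f : SimpleGraph V) (w : ℝ → ℝ → ℝ) :
    density (f.comap e) w = density f w := by
  set T := MeasurableEquiv.arrowCongr' e (MeasurableEquiv.refl ℝ)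
  have hT : MeasurePreserving T :=
    volume_preserving_arrowCongr' e (MeasurableEquiv.refl ℝ) (MeasurePreserving.id _)
  have hpre : T ⁻¹' (Set.univ.pi fun _ : V => Set.Icc (0 : ℝ) 1) =
      Set.univ.pi fun _ : W => Set.Icc 0 1 := by
    ext x
    simp only [Set.mem_preimage, Set.mem_univ_pi]
    exact e.symm.forall_congr_right (q := fun a => x a ∈ Set.Icc 0 1)
  rw [density, density, ← hT.setIntegral_preimage_emb T.measurableEmbedding, hpre]
  refine setIntegral_congr_fun (MeasurableSet.univ_pi fun _ => measurableSet_Icc) fun x _ => ?_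
  simp [edgeProd_comap, T, MeasurableEquiv.arrowCongr', Equiv.arrowCongr']

end Relabel

section Partitions

variable {p : ℕ} {P : Finset (Finset (Fin p))}

lemma IsPairPartition.isPartition (hP : IsPairPartition P) : IsPartition P :=
  ⟨fun B hB => Finset.card_pos.1 (by rw [hP.1 B hB]; norm_num), hP.2⟩

namespace IsPartition

noncomputable def blockOf (hP : IsPartition P) (j : Fin p) : {B // B ∈ P} :=
  ⟨(hP.2 j).exists.choose, (hP.2 j).exists.choose_spec.1⟩

lemma mem_blockOf (hP : IsPartition P) (j : Fin p) : j ∈ (hP.blockOf j).1 :=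
  (hP.2 j).exists.choose_spec.2

lemma blockOf_eq (hP : IsPartition P) {j : Fin p} {B : {B // B ∈ P}} (hj : j ∈ B.1) :
    hP.blockOf j = B :=
  Subtype.ext ((hP.2 j).unique ⟨(hP.blockOf j).2, hP.mem_blockOf j⟩ ⟨B.2, hj⟩)

/-- The filter is the paper's `P ≤ ker i`: such tuples are exactly labellings of the blocks. -/
lemma sum_constOnBlocks_eq {α M : Type*} [Fintype α] [DecidableEq α] [AddCommMonoid M]
    (hP : IsPartition P) (G : ({B // B ∈ P} → α) → M) :
    ∑ i ∈ Finset.univ.filter (fun i : Fin p → α => ∀ B ∈ P, ∀ u ∈ B, ∀ v ∈ B, i u = i v),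
        G (fun U => i (U.1.min' (hP.1 U.1 U.2))) = ∑ φ, G φ := by
  refine Finset.sum_nbij' (fun i U => i (U.1.min' (hP.1 U.1 U.2)))
    (fun φ j => φ (hP.blockOf j)) (fun _ _ => Finset.mem_univ _) ?_ ?_ ?_ fun _ _ => rfl
  · intro φ _
    refine Finset.mem_filter.2 ⟨Finset.mem_univ _, fun B hB u hu v hv => ?_⟩
    simp only [hP.blockOf_eq (B := ⟨B, hB⟩) hu, hP.blockOf_eq (B := ⟨B, hB⟩) hv]
  · intro i hi
    funext j
    exact (Finset.mem_filter.1 hi).2 _ (hP.blockOf j).2 _ (Finset.min'_mem _ _) _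
      (hP.mem_blockOf j)
  · intro φ _
    funext U
    exact congrArg φ (hP.blockOf_eq (Finset.min'_mem _ _))

end IsPartition

lemma IsPairPartition.two_mul_card (hP : IsPairPartition P) : 2 * P.card = p := by
  have hdisj : (P : Set (Finset (Fin p))).PairwiseDisjoint id := fun B₁ h₁ B₂ h₂ hne =>
    Finset.disjoint_left.2 fun j hj₁ hj₂ => hne ((hP.2 j).unique ⟨h₁, hj₁⟩ ⟨h₂, hj₂⟩)
  have hcover : P.biUnion id = Finset.univ :=
    Finset.eq_univ_of_forall fun j => Finset.mem_biUnion.2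
      ⟨_, (hP.isPartition.blockOf j).2, hP.isPartition.mem_blockOf j⟩
  calc 2 * P.card
      = ∑ B ∈ P, (id B).card := by rw [mul_comm]; exact (Finset.sum_const_nat hP.1).symm
    _ = p := by rw [← Finset.card_biUnion hdisj, hcover, Finset.card_univ, Fintype.card_fin]

lemma pairPartitions_eq_empty_of_odd (hp : Odd p) : pairPartitions p = ∅ := by
  refine Finset.eq_empty_of_forall_notMem fun P hP => ?_
  have := (Finset.mem_filter.1 hP).2.two_mul_card
  obtain ⟨m, rfl⟩ := hp
  omega

lemma momentFormula_eq_zero_of_odd (hp : Odd p) (w : ℝ → ℝ → ℝ) : momentFormula p w = 0 := by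
  rw [momentFormula, pairPartitions_eq_empty_of_odd hp, Finset.sum_empty]

end Partitions

lemma sum_pow_eq_sum_prod_ofFn {R ι : Type*} [Semiring R] [Fintype ι] (a : ι → R) (p : ℕ) :
    (∑ k, a k) ^ p = ∑ i : Fin p → ι, (List.ofFn fun j => a (i j)).prod := by
  induction p with
  | zero => simp
  | succ p ih =>
    rw [pow_succ', ih, Finset.sum_mul_sum, ← (Fin.consEquiv fun _ => ι).sum_comp,
      Fintype.sum_prod_type]
    simp [Fin.consEquiv, List.ofFn_succ]

def IsMixedQGaussian {A : Type*} [Ring A] [Algebra ℂ A] (τ : A →ₗ[ℂ] ℂ) {n : ℕ}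
    (Q : Fin n → Fin n → ℝ) (s : Fin n → A) : Prop :=
  ∀ (p : ℕ) (i : Fin p → Fin n),
    τ (List.ofFn (fun j => s (i j))).prod =
      ((∑ P ∈ (pairPartitions p).filter (fun P => ∀ B ∈ P, ∀ u ∈ B, ∀ v ∈ B, i u = i v),
        edgeProd (interGraph P) (fun U V =>
          if h : U.1.Nonempty ∧ V.1.Nonempty then
            Q (i (U.1.min' h.1)) (i (V.1.min' h.2)) else 1) : ℝ) : ℂ)

/-- The normalisation `n^{-p/2}` of `S_n^p` is `n^{-#P}`, that of the step-graphon density. -/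
lemma sum_constOnBlocks_eq_density {p n : ℕ} (hn : 0 < n) {P : Finset (Finset (Fin p))}
    (hP : IsPairPartition P) (Q : Fin n → Fin n → ℝ) :
    (Real.sqrt n)⁻¹ ^ p *
      ∑ i ∈ Finset.univ.filter (fun i : Fin p → Fin n => ∀ B ∈ P, ∀ u ∈ B, ∀ v ∈ B, i u = i v),
        edgeProd (interGraph P) (fun U V =>
          if h : U.1.Nonempty ∧ V.1.Nonempty then
            Q (i (U.1.min' h.1)) (i (V.1.min' h.2)) else 1) =
      density (interGraph P) (stepFn Q) := by
  have hscale : (Real.sqrt n)⁻¹ ^ p = (1 / n : ℝ) ^ P.card := by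
    conv_lhs => rw [← hP.two_mul_card]
    rw [pow_mul, inv_pow, Real.sq_sqrt n.cast_nonneg, one_div]
  have hP' := hP.isPartition
  rw [density_stepFn _ hn, Fintype.card_coe, hscale,
    ← hP'.sum_constOnBlocks_eq (fun φ => edgeProd (interGraph P) fun U V => Q (φ U) (φ V))]
  refine congrArg _ (Finset.sum_congr rfl fun i _ => ?_)
  congr 1
  funext U V
  rw [dif_pos ⟨hP'.1 U.1 U.2, hP'.1 V.1 V.2⟩]

lemma IsMixedQGaussian.moment_eq_sum_density {A : Type*} [Ring A] [Algebra ℂ A]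
    {τ : A →ₗ[ℂ] ℂ} {n : ℕ} (hn : 0 < n) {Q : Fin n → Fin n → ℝ} {s : Fin n → A}
    (hs : IsMixedQGaussian τ Q s) (p : ℕ) :
    τ (((Real.sqrt n : ℂ)⁻¹ • ∑ k, s k) ^ p) =
      ((∑ P ∈ pairPartitions p, density (interGraph P) (stepFn Q) : ℝ) : ℂ) := by
  have hswap : ∑ P ∈ pairPartitions p, density (interGraph P) (stepFn Q) =
      (Real.sqrt n)⁻¹ ^ p * ∑ i : Fin p → Fin n,
        ∑ P ∈ (pairPartitions p).filter (fun P => ∀ B ∈ P, ∀ u ∈ B, ∀ v ∈ B, i u = i v),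
          edgeProd (interGraph P) (fun U V =>
            if h : U.1.Nonempty ∧ V.1.Nonempty then
              Q (i (U.1.min' h.1)) (i (V.1.min' h.2)) else 1) := by
    simp only [Finset.sum_filter]
    rw [Finset.sum_comm, Finset.mul_sum]
    refine Finset.sum_congr rfl fun P hP => ?_
    rw [← sum_constOnBlocks_eq_density hn (Finset.mem_filter.1 hP).2 Q, Finset.sum_filter]
  rw [smul_pow, map_smul, sum_pow_eq_sum_prod_ofFn, map_sum,
    Finset.sum_congr rfl fun i _ => hs p i, smul_eq_mul, hswap]
  push_cast
  rfl

open scoped ComplexOrder in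
theorem clt_for_mixed_qGaussian_general
    {A : Type*} [CStarAlgebra A]
    (τ : A →ₗ[ℂ] ℂ)
    (Q : ∀ n : ℕ, Fin n → Fin n → ℝ)
    (w : ℝ → ℝ → ℝ)
    (hconv : ∀ (m : ℕ) (f : SimpleGraph (Fin m)),
      Tendsto (fun n => density f (stepFn (Q n))) atTop (𝓝 (density f w)))
    (s : ∀ n : ℕ, Fin n → A)
    (hmom : ∀ (n : ℕ) (p : ℕ) (i : Fin p → Fin n),
      τ (List.ofFn (fun j => s n (i j))).prod =
        ((∑ P ∈ (pairPartitions p).filter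
            (fun P => ∀ B ∈ P, ∀ u ∈ B, ∀ v ∈ B, i u = i v),
          edgeProd (interGraph P) (fun U V =>
            if h : U.1.Nonempty ∧ V.1.Nonempty then
              Q n (i (U.1.min' h.1)) (i (V.1.min' h.2)) else 1) : ℝ) : ℂ))
    (p : ℕ) :
    Tendsto (fun n : ℕ => τ (((Real.sqrt n : ℂ)⁻¹ • ∑ k : Fin n, s n k) ^ p))
      atTop (𝓝 ((momentFormula p w : ℝ) : ℂ)) ∧
    (Odd p → momentFormula p w = 0) := by
  refine ⟨?_, fun hp => momentFormula_eq_zero_of_odd hp w⟩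
  have hdensity : Tendsto (fun n => ∑ P ∈ pairPartitions p, density (interGraph P) (stepFn (Q n)))
      atTop (𝓝 (momentFormula p w)) := by
    refine tendsto_finsetSum _ fun P _ => ?_
    -- `hconv` speaks of graphs on `Fin m`, so relabel the blocks of `P` by `Fin P.card`.
    simpa only [density_comap] using hconv _ ((interGraph P).comap P.equivFin.symm)
  refine ((Complex.continuous_ofReal.tendsto _).comp hdensity).congr' ?_
  filter_upwards [eventually_gt_atTop 0] with n hn
  exact (IsMixedQGaussian.moment_eq_sum_density hn (hmom n) p).symm

open scoped ComplexOrder in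
/-- **Theorem 5.1 (CLT for mixed q-Gaussian systems).**  If the step graphons of the symmetric
matrices `Q_n` (entries in `[-1,1]`) converge to `w`, and `s_1, …, s_n` is a mixed `q`-Gaussian
system with matrix `Q_n`, then the moments of `S_n = n^{-1/2} Σ_k s_k` converge to
`Σ_{π ∈ P₂(p)} ρ(f_π, w)`; odd limiting moments vanish. -/
theorem clt_for_mixed_qGaussian
    {A : Type*} [CStarAlgebra A]
    (τ : A →ₗ[ℂ] ℂ) (hτ1 : τ 1 = 1)
    (hτpos : ∀ a : A, 0 ≤ τ (star a * a))
    (hτtr : ∀ a b : A, τ (a * b) = τ (b * a))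
    (Q : ∀ n : ℕ, Fin n → Fin n → ℝ)
    (hQsymm : ∀ n i j, Q n i j = Q n j i)
    (hQmem : ∀ n i j, Q n i j ∈ Set.Icc (-1:ℝ) 1)
    (w : ℝ → ℝ → ℝ)
    (hw_meas : Measurable (Function.uncurry w))
    (hw_symm : ∀ x y : ℝ, w x y = w y x)
    (hw_mem : ∀ x y : ℝ, w x y ∈ Set.Icc (-1:ℝ) 1)
    (hconv : ∀ (m : ℕ) (f : SimpleGraph (Fin m)),
      Tendsto (fun n => density f (stepFn (Q n))) atTop (𝓝 (density f w)))
    (s : ∀ n : ℕ, Fin n → A)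
    (hsa : ∀ n k, IsSelfAdjoint (s n k))
    (hmom : ∀ (n : ℕ) (p : ℕ) (i : Fin p → Fin n),
      τ (List.ofFn (fun j => s n (i j))).prod =
        ((∑ P ∈ (pairPartitions p).filter
            (fun P => ∀ B ∈ P, ∀ u ∈ B, ∀ v ∈ B, i u = i v),
          edgeProd (interGraph P) (fun U V =>
            if h : U.1.Nonempty ∧ V.1.Nonempty then
              Q n (i (U.1.min' h.1)) (i (V.1.min' h.2)) else 1) : ℝ) : ℂ))
    (p : ℕ) :
    Tendsto (fun n : ℕ => τ (((Real.sqrt n : ℂ)⁻¹ • ∑ k : Fin n, s n k) ^ p))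
      atTop (𝓝 ((momentFormula p w : ℝ) : ℂ)) ∧
    (Odd p → momentFormula p w = 0) :=
  clt_for_mixed_qGaussian_general τ Q w hconv s hmom p

end EpsCLT
end

section
/- Let w, w' : [0,1]² → [0,1] be graphons and λ ∈ (0,1). Define the graphon w̄* by w̄*(x,y) = w(x/λ, y/λ) if x, y ∈ [0,λ); w̄*(x,y) = w'((x−λ)/(1−λ), (y−λ)/(1−λ)) if x, y ∈ [λ,1]; and w̄*(x,y) = 0 otherwise. Then for every connected finite simple graph f with k ≥ 1 vertices, ρ(f, w̄*) = λ^k ρ(f, w) + (1−λ)^k ρ(f, w'). -/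
open MeasureTheory Filter Topology
open scoped Classical

namespace EpsCLT

/-! On the cube `[0,1]^V` the glued kernel vanishes across the cut `x = λ`, so by connectedness
the integrand of `ρ(f, w̄*)` vanishes unless all coordinates lie in `[0,λ)` or all lie in
`[λ,1]`. On each of these two boxes the integrand is that of `ρ(f, w)` (resp. `ρ(f, w')`)
composed with the affine map onto `[0,1]^V`, whose Jacobian is `λ^k` (resp. `(1-λ)^k`). -/

theorem setIntegral_pi_Icc_comp_affine {ι : Type*} [Fintype ι] (g : (ι → ℝ) → ℝ) {a b : ℝ}
    (hab : a < b) :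
    ∫ x in Set.univ.pi (fun _ : ι => Set.Icc a b), g (fun i => (x i - a) / (b - a))
      = (b - a) ^ Fintype.card ι * ∫ y in Set.univ.pi (fun _ : ι => Set.Icc (0:ℝ) 1), g y := by
  set T : Set (ι → ℝ) := Set.univ.pi fun _ => Set.Icc 0 1
  set φ : (ι → ℝ) → (ι → ℝ) := fun x => (b - a)⁻¹ • (x - fun _ => a)
  have hc : 0 < b - a := sub_pos.2 hab
  have hpre : Set.univ.pi (fun _ : ι => Set.Icc a b) = φ ⁻¹' T := by
    ext x
    simp only [φ, T, Set.mem_preimage, Set.mem_univ_pi, Set.mem_Icc, Pi.smul_apply, Pi.sub_apply,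
      smul_eq_mul, ← div_eq_inv_mul, div_nonneg_iff, div_le_one hc]
    refine forall_congr' fun i => ?_
    constructor
    · rintro ⟨h1, h2⟩; exact ⟨Or.inl ⟨by linarith, hc.le⟩, by linarith⟩
    · rintro ⟨h1 | h1, h2⟩ <;> constructor <;> linarith [h1.1, h1.2]
  have hcomp : (fun x => g fun i => (x i - a) / (b - a)) = g ∘ φ := by
    ext x; simp only [Function.comp_apply, φ]; congr 1 with i; simp [div_eq_inv_mul]
  have hT : MeasurableSet T := MeasurableSet.univ_pi fun _ => measurableSet_Icc
  calc ∫ x in Set.univ.pi (fun _ : ι => Set.Icc a b), g (fun i => (x i - a) / (b - a))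
      = ∫ x, T.indicator g ((b - a)⁻¹ • (x - fun _ => a)) := by
        rw [hpre, ← integral_indicator (hT.preimage (by fun_prop)), hcomp]
        simp only [Set.indicator_comp_right, φ]
    _ = ∫ x, T.indicator g ((b - a)⁻¹ • x) :=
        integral_sub_right_eq_self (fun y => T.indicator g ((b - a)⁻¹ • y)) _
    _ = (b - a) ^ Fintype.card ι * ∫ y in T, g y := by
        rw [Measure.integral_comp_inv_smul_of_nonneg _ _ hc.le, integral_indicator hT,
          Module.finrank_fintype_fun_eq_card, smul_eq_mul]

section edgeProd

variable {V : Type*} [Fintype V] (f : SimpleGraph V)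

theorem measurable_edgeProd {w : ℝ → ℝ → ℝ} (hw : Measurable (Function.uncurry w)) :
    Measurable fun x : V → ℝ => edgeProd f fun u v => w (x u) (x v) := by
  refine Finset.measurable_prod _ fun e _ => ?_
  induction e using Sym2.ind with
  | _ u v =>
    have hw' (a b : V) : Measurable fun x : V → ℝ => w (x a) (x b) :=
      hw.comp (f := fun x : V → ℝ => (x a, x b)) (by fun_prop)
    exact ((hw' u v).add (hw' v u)).div_const 2

theorem edgeProd_mem_Icc {F : V → V → ℝ} (hF : ∀ u v, F u v ∈ Set.Icc (0:ℝ) 1) :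
    edgeProd f F ∈ Set.Icc (0:ℝ) 1 := by
  have hfactor (e : Sym2 V) :
      Sym2.lift ⟨fun u v => (F u v + F v u) / 2, fun u v => by ring⟩ e ∈ Set.Icc (0:ℝ) 1 := by
    induction e using Sym2.ind with
    | _ u v =>
      obtain ⟨h₁, h₂⟩ := hF u v
      obtain ⟨h₃, h₄⟩ := hF v u
      simp only [Sym2.lift_mk, Set.mem_Icc]
      constructor <;> linarith
  exact ⟨Finset.prod_nonneg fun e _ => (hfactor e).1,
    Finset.prod_le_one (fun e _ => (hfactor e).1) fun e _ => (hfactor e).2⟩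

theorem integrableOn_edgeProd {w : ℝ → ℝ → ℝ} (hw_meas : Measurable (Function.uncurry w))
    (hw_mem : ∀ x y, w x y ∈ Set.Icc (0:ℝ) 1) {s : Set (V → ℝ)} (hs : volume s ≠ ⊤) :
    IntegrableOn (fun x : V → ℝ => edgeProd f fun u v => w (x u) (x v)) s :=
  Measure.integrableOn_of_bounded (M := 1) hs (measurable_edgeProd f hw_meas).aestronglyMeasurable
    (.of_forall fun x => by
      obtain ⟨h₀, h₁⟩ := edgeProd_mem_Icc f fun u v => hw_mem (x u) (x v)
      rwa [Real.norm_of_nonneg h₀])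

theorem edgeProd_eq_zero_of_cut {F : V → V → ℝ} (hf : f.Preconnected) (P : V → Prop)
    {u v : V} (hu : P u) (hv : ¬ P v) (hF : ∀ a b, P a → ¬ P b → F a b = 0 ∧ F b a = 0) :
    edgeProd f F = 0 := by
  obtain ⟨p⟩ := hf u v
  obtain ⟨d, -, hd₁, hd₂⟩ := p.exists_boundary_dart {a | P a} hu hv
  refine Finset.prod_eq_zero (SimpleGraph.mem_edgeFinset.2 d.edge_mem) ?_
  obtain ⟨h₁, h₂⟩ := hF _ _ hd₁ hd₂
  simp [SimpleGraph.Dart.edge, h₁, h₂]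

end edgeProd

/-- The kernel `w̄*` of the statement. -/
noncomputable def freeGlue (w w' : ℝ → ℝ → ℝ) (lam : ℝ) : ℝ → ℝ → ℝ := fun x y =>
  if x ∈ Set.Ico (0:ℝ) lam ∧ y ∈ Set.Ico (0:ℝ) lam then w (x / lam) (y / lam)
  else if x ∈ Set.Icc lam 1 ∧ y ∈ Set.Icc lam 1 then
    w' ((x - lam) / (1 - lam)) ((y - lam) / (1 - lam))
  else 0

section freeGlue

variable {w w' : ℝ → ℝ → ℝ} {lam x y : ℝ}

theorem freeGlue_of_mem_Ico (hx : x ∈ Set.Ico 0 lam) (hy : y ∈ Set.Ico 0 lam) :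
    freeGlue w w' lam x y = w (x / lam) (y / lam) :=
  if_pos ⟨hx, hy⟩

theorem freeGlue_of_mem_Icc (hx : x ∈ Set.Icc lam 1) (hy : y ∈ Set.Icc lam 1) :
    freeGlue w w' lam x y = w' ((x - lam) / (1 - lam)) ((y - lam) / (1 - lam)) :=
  (if_neg fun h => (h.1.2.trans_le hx.1).false).trans (if_pos ⟨hx, hy⟩)

theorem freeGlue_eq_zero_of_lt_of_le (hx : x < lam) (hy : lam ≤ y) :
    freeGlue w w' lam x y = 0 ∧ freeGlue w w' lam y x = 0 := by
  constructor <;>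
  · unfold freeGlue
    split_ifs with h₁ h₂ <;> first | rfl | (simp only [Set.mem_Ico, Set.mem_Icc] at *; linarith)

theorem freeGlue_mem_Icc (hw : ∀ x y, w x y ∈ Set.Icc (0:ℝ) 1)
    (hw' : ∀ x y, w' x y ∈ Set.Icc (0:ℝ) 1) (x y : ℝ) :
    freeGlue w w' lam x y ∈ Set.Icc (0:ℝ) 1 := by
  unfold freeGlue
  split_ifs
  exacts [hw _ _, hw' _ _, ⟨le_rfl, zero_le_one⟩]

theorem measurable_freeGlue (hw : Measurable (Function.uncurry w))
    (hw' : Measurable (Function.uncurry w')) :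
    Measurable (Function.uncurry (freeGlue w w' lam)) := by
  refine .ite ?_ (hw.comp (f := fun p : ℝ × ℝ => (p.1 / lam, p.2 / lam)) (by fun_prop))
    (.ite ?_ (hw'.comp (f := fun p : ℝ × ℝ => ((p.1 - lam) / (1 - lam), (p.2 - lam) / (1 - lam)))
      (by fun_prop)) measurable_const)
  · exact (measurableSet_Ico.preimage measurable_fst).inter
      (measurableSet_Ico.preimage measurable_snd)
  · exact (measurableSet_Icc.preimage measurable_fst).inter
      (measurableSet_Icc.preimage measurable_snd)

end freeGlue

section density

variable {V : Type*} [Fintype V] (f : SimpleGraph V) (w w' : ℝ → ℝ → ℝ) {lam : ℝ}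

theorem setIntegral_edgeProd_freeGlue_low (hlam : 0 < lam) :
    ∫ x in Set.univ.pi (fun _ : V => Set.Ico 0 lam),
        edgeProd f (fun u v => freeGlue w w' lam (x u) (x v))
      = lam ^ Fintype.card V * density f w := by
  have hIco : MeasurableSet (Set.univ.pi fun _ : V => Set.Ico 0 lam) :=
    .univ_pi fun _ => measurableSet_Ico
  calc _ = ∫ x in Set.univ.pi (fun _ : V => Set.Ico 0 lam),
          edgeProd f (fun u v => w ((x u - 0) / (lam - 0)) ((x v - 0) / (lam - 0))) := by
        refine setIntegral_congr_fun hIco fun x hx => ?_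
        rw [Set.mem_univ_pi] at hx
        simp only [sub_zero, freeGlue_of_mem_Ico (hx _) (hx _)]
    _ = ∫ x in Set.univ.pi (fun _ : V => Set.Icc 0 lam),
          edgeProd f (fun u v => w ((x u - 0) / (lam - 0)) ((x v - 0) / (lam - 0))) :=
        setIntegral_congr_set (by rw [volume_pi]; exact Measure.pi_Ico_ae_eq_pi_Icc)
    _ = lam ^ Fintype.card V * density f w := by
        rw [setIntegral_pi_Icc_comp_affine (fun y => edgeProd f fun u v => w (y u) (y v))
          (by simpa using hlam), sub_zero]
        rfl

theorem setIntegral_edgeProd_freeGlue_high (hlam : lam < 1) :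
    ∫ x in Set.univ.pi (fun _ : V => Set.Icc lam 1),
        edgeProd f (fun u v => freeGlue w w' lam (x u) (x v))
      = (1 - lam) ^ Fintype.card V * density f w' := by
  have hIcc : MeasurableSet (Set.univ.pi fun _ : V => Set.Icc lam 1) :=
    .univ_pi fun _ => measurableSet_Icc
  calc _ = ∫ x in Set.univ.pi (fun _ : V => Set.Icc lam 1),
          edgeProd f (fun u v => w' ((x u - lam) / (1 - lam)) ((x v - lam) / (1 - lam))) := by
        refine setIntegral_congr_fun hIcc fun x hx => ?_
        rw [Set.mem_univ_pi] at hx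
        simp only [freeGlue_of_mem_Icc (hx _) (hx _)]
    _ = (1 - lam) ^ Fintype.card V * density f w' :=
        setIntegral_pi_Icc_comp_affine (fun y => edgeProd f fun u v => w' (y u) (y v)) hlam

theorem edgeProd_freeGlue_eq_zero (hf : f.Preconnected) {x : V → ℝ} {u v : V}
    (hu : x u < lam) (hv : lam ≤ x v) :
    edgeProd f (fun a b => freeGlue w w' lam (x a) (x b)) = 0 :=
  edgeProd_eq_zero_of_cut f hf (fun a => x a < lam) hu hv.not_gt fun _ _ ha hb =>
    freeGlue_eq_zero_of_lt_of_le ha (not_lt.1 hb)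

end density

theorem density_free_glue_general
    (w w' : ℝ → ℝ → ℝ)
    (hw_meas : Measurable (Function.uncurry w))
    (hw_mem : ∀ x y : ℝ, w x y ∈ Set.Icc (0:ℝ) 1)
    (hw'_meas : Measurable (Function.uncurry w'))
    (hw'_mem : ∀ x y : ℝ, w' x y ∈ Set.Icc (0:ℝ) 1)
    (lam : ℝ) (hlam : lam ∈ Set.Ioo (0:ℝ) 1)
    {V : Type*} [Fintype V] (f : SimpleGraph V) (hconn : f.Connected) :
    density f (fun x y =>
      if x ∈ Set.Ico (0:ℝ) lam ∧ y ∈ Set.Ico (0:ℝ) lam then w (x / lam) (y / lam)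
      else if x ∈ Set.Icc lam 1 ∧ y ∈ Set.Icc lam 1 then
        w' ((x - lam) / (1 - lam)) ((y - lam) / (1 - lam))
      else 0)
    = lam ^ (Fintype.card V) * density f w
      + (1 - lam) ^ (Fintype.card V) * density f w' := by
  obtain ⟨hl₀, hl₁⟩ := hlam
  obtain ⟨v₀⟩ := hconn.nonempty
  set S : Set (V → ℝ) := Set.univ.pi fun _ => Set.Icc 0 1
  set A : Set (V → ℝ) := Set.univ.pi fun _ => Set.Ico 0 lam
  set B : Set (V → ℝ) := Set.univ.pi fun _ => Set.Icc lam 1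
  have hAS : A ⊆ S := Set.pi_mono fun _ _ => Set.Ico_subset_Icc_self.trans
    (Set.Icc_subset_Icc_right hl₁.le)
  have hBS : B ⊆ S := Set.pi_mono fun _ _ => Set.Icc_subset_Icc_left hl₀.le
  have hAB : Disjoint A B := Set.disjoint_left.2 fun x hA hB =>
    ((hA v₀ trivial).2.trans_le (hB v₀ trivial).1).false
  have hint :
      IntegrableOn (fun x : V → ℝ => edgeProd f fun u v => freeGlue w w' lam (x u) (x v)) S :=
    integrableOn_edgeProd f (measurable_freeGlue hw_meas hw'_meas)
      (freeGlue_mem_Icc hw_mem hw'_mem) (isCompact_univ_pi fun _ => isCompact_Icc).measure_ne_top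
  have hvanish : ∀ x ∈ S \ (A ∪ B),
      edgeProd f (fun u v => freeGlue w w' lam (x u) (x v)) = 0 := by
    rintro x ⟨hS, hx⟩
    simp only [S, A, B, Set.mem_union, Set.mem_univ_pi, not_or, not_forall, Set.mem_Ico,
      Set.mem_Icc] at hS hx
    obtain ⟨⟨high, hhigh⟩, ⟨low, hlow⟩⟩ := hx
    exact edgeProd_freeGlue_eq_zero f w w' hconn.preconnected (u := low) (v := high)
      (by grind) (by grind)
  calc density f (freeGlue w w' lam)
      = ∫ x in A ∪ B, edgeProd f fun u v => freeGlue w w' lam (x u) (x v) :=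
        setIntegral_eq_of_subset_of_forall_sdiff_eq_zero (.univ_pi fun _ => measurableSet_Icc)
          (Set.union_subset hAS hBS) hvanish
    _ = _ := by
        rw [setIntegral_union hAB (.univ_pi fun _ => measurableSet_Icc) (hint.mono_set hAS)
          (hint.mono_set hBS), setIntegral_edgeProd_freeGlue_low f w w' hl₀,
          setIntegral_edgeProd_freeGlue_high f w w' hl₁]

/-- For the "free convolution" gluing `w̄*` of two graphons along `[0,λ) ⊔ [λ,1]` (zero between
the two blocks), the homomorphism density of a connected graph splits as
`ρ(f, w̄*) = λ^k ρ(f, w) + (1-λ)^k ρ(f, w')`. -/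
theorem density_free_glue
    (w w' : ℝ → ℝ → ℝ)
    (hw_meas : Measurable (Function.uncurry w))
    (hw_symm : ∀ x y : ℝ, w x y = w y x)
    (hw_mem : ∀ x y : ℝ, w x y ∈ Set.Icc (0:ℝ) 1)
    (hw'_meas : Measurable (Function.uncurry w'))
    (hw'_symm : ∀ x y : ℝ, w' x y = w' y x)
    (hw'_mem : ∀ x y : ℝ, w' x y ∈ Set.Icc (0:ℝ) 1)
    (lam : ℝ) (hlam : lam ∈ Set.Ioo (0:ℝ) 1)
    {V : Type*} [Fintype V] (f : SimpleGraph V) (hconn : f.Connected) :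
    density f (fun x y =>
      if x ∈ Set.Ico (0:ℝ) lam ∧ y ∈ Set.Ico (0:ℝ) lam then w (x / lam) (y / lam)
      else if x ∈ Set.Icc lam 1 ∧ y ∈ Set.Icc lam 1 then
        w' ((x - lam) / (1 - lam)) ((y - lam) / (1 - lam))
      else 0)
    = lam ^ (Fintype.card V) * density f w
      + (1 - lam) ^ (Fintype.card V) * density f w' :=
  density_free_glue_general w w' hw_meas hw_mem hw'_meas hw'_mem lam hlam f hconn

end EpsCLT
end

section
/- Let w : [0,1]² → [0,1] be a graphon. For m ∈ ℕ define κ_m(w) := Σ_{π ∈ P_2(m), f_π connected} ρ(f_π, w) (so κ_m(w) = 0 for odd m and κ_2(w) = 1). Then for every p ∈ ℕ, Σ_{π ∈ P_2(p)} ρ(f_π, w) = Σ_{σ ∈ NC(p)} ∏_{V ∈ σ} κ_{|V|}(w), where NC(p) denotes the set of noncrossing partitions of [p]. In other words, the numbers κ_m(w) are the free cumulants of the measure μ_w whose p-th moment is Σ_{π ∈ P_2(p)} ρ(f_π, w). -/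
open MeasureTheory Filter Topology
open scoped Classical

namespace EpsCLT

/-- `κ_m(w) = Σ_{π ∈ P₂(m), f_π connected} ρ(f_π, w)`, the candidate `m`-th free cumulant. -/
noncomputable def connectedPairMoment (m : ℕ) (w : ℝ → ℝ → ℝ) : ℝ :=
  ∑ P ∈ (pairPartitions m).filter (fun P => (interGraph P).Connected),
    density (interGraph P) w

/-! The blocks of a pair partition `π` lying in one connected component of `f_π` cover a set of
points, and these sets form a noncrossing partition `σ`, the noncrossing closure of `π`: if two
of them crossed, some block of one component would straddle two points of a block of the other,
and the two blocks would cross. Conversely `π` is recovered from `σ` and, for each block `A` of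
`σ`, the pair partition of `A` formed by the blocks of `π` inside `A`, which is connected; and
any such family glues back to a pair partition with closure `σ`. Blocks lying in different
blocks of `σ` do not cross, so `f_π` is the disjoint union of the intersection graphs of the
pieces and its homomorphism density is the product of theirs. Grouping the pair partitions by
their closure gives the formula. -/

theorem _root_.SimpleGraph.Reachable.of_adj_imp {V : Type*} {G : SimpleGraph V} {Q : V → Prop}
    (hQ : ∀ u v, G.Adj u v → Q u → Q v) {u v : V} (h : G.Reachable u v) (hu : Q u) : Q v := by
  rw [SimpleGraph.reachable_iff_reflTransGen] at h
  induction h with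
  | refl => exact hu
  | tail _ hadj ih => exact hQ _ _ hadj ih

theorem reachable_sigma_iff {ι : Type*} {κ : ι → Type*} (G : SimpleGraph (Σ i, κ i))
    (hG : ∀ x y, G.Adj x y → x.1 = y.1) (hconn : ∀ i, (G.comap (Sigma.mk i)).Connected)
    {x y : Σ i, κ i} : G.Reachable x y ↔ x.1 = y.1 := by
  refine ⟨fun h => h.of_adj_imp (Q := fun z => x.1 = z.1)
    (fun u v huv hu => hu.trans (hG u v huv)) rfl, ?_⟩
  obtain ⟨i, u⟩ := x
  obtain ⟨j, v⟩ := y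
  rintro rfl
  exact (hconn i u v).map (SimpleGraph.Hom.comap _ G)

section Density

variable {V W : Type*} [Fintype V] [Fintype W]

theorem density_eq_integral_pi (G : SimpleGraph V) (w : ℝ → ℝ → ℝ) :
    density G w = ∫ x, edgeProd G (fun u v => w (x u) (x v))
      ∂(Measure.pi fun _ : V => volume.restrict (Set.Icc (0:ℝ) 1)) := by
  rw [density, volume_pi, Measure.restrict_pi_pi]

theorem edgeProd_comap_equiv (e : V ≃ W) (H : SimpleGraph W) (F : W → W → ℝ) :
    edgeProd (H.comap e) (fun u v => F (e u) (e v)) = edgeProd H F := by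
  refine Finset.prod_nbij' (Sym2.map e) (Sym2.map e.symm) ?_ ?_ ?_ ?_ ?_ <;>
    simp [Sym2.forall, Sym2.map_map]

theorem density_comap_equiv (e : V ≃ W) (H : SimpleGraph W) (w : ℝ → ℝ → ℝ) :
    density (H.comap e) w = density H w := by
  rw [density_eq_integral_pi, density_eq_integral_pi,
    ← (measurePreserving_piCongrLeft (fun _ => volume.restrict (Set.Icc (0:ℝ) 1)) e).integral_comp']
  simp_rw [← edgeProd_comap_equiv e H, MeasurableEquiv.coe_piCongrLeft,
    Equiv.piCongrLeft_apply_apply]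

end Density

section Sigma

variable {ι : Type*} [Fintype ι] {κ : ι → Type*} [∀ i, Fintype (κ i)]

theorem measurePreserving_piCurry_pi {X : Type*} [MeasurableSpace X] (μ : Measure X)
    [IsProbabilityMeasure μ] :
    MeasurePreserving (MeasurableEquiv.piCurry fun (i : ι) (_ : κ i) => X)
      (Measure.pi fun _ => μ) (Measure.pi fun i => Measure.pi fun _ : κ i => μ) := by
  refine ⟨(MeasurableEquiv.piCurry _).measurable, ?_⟩
  simp_rw [← Measure.infinitePi_eq_pi]
  exact Measure.infinitePi_map_piCurry fun _ _ => μ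

theorem integral_pi_sigma_prod {X : Type*} [MeasurableSpace X] (μ : Measure X)
    [IsProbabilityMeasure μ] (f : ∀ i, (κ i → X) → ℝ) :
    ∫ x : (Σ i, κ i) → X, ∏ i, f i (fun j => x ⟨i, j⟩) ∂(Measure.pi fun _ => μ) =
      ∏ i, ∫ y, f i y ∂(Measure.pi fun _ => μ) :=
  ((measurePreserving_piCurry_pi μ).integral_comp' fun y => ∏ i, f i (y i)).trans
    (integral_fintype_prod_eq_prod _)

theorem edgeProd_sigma (G : SimpleGraph (Σ i, κ i)) (hG : ∀ x y, G.Adj x y → x.1 = y.1)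
    (F : (Σ i, κ i) → (Σ i, κ i) → ℝ) :
    edgeProd G F = ∏ i, edgeProd (G.comap (Sigma.mk i)) (fun u v => F ⟨i, u⟩ ⟨i, v⟩) := by
  simp only [edgeProd]
  rw [Finset.prod_sigma']
  refine (Finset.prod_bij (fun e _ => e.2.map (Sigma.mk e.1)) ?_ ?_ ?_ ?_).symm
  · rintro ⟨i, ⟨u, v⟩⟩ he
    simpa using he
  · rintro ⟨i, ⟨u, v⟩⟩ - ⟨i', ⟨u', v'⟩⟩ - h
    obtain ⟨⟨rfl, ⟨⟩⟩, -, ⟨⟩⟩ | ⟨⟨rfl, ⟨⟩⟩, -, ⟨⟩⟩ := by simpa using h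
    · rfl
    · simp [Sym2.eq_swap]
  · rintro ⟨⟨i, u⟩, ⟨j, v⟩⟩ he
    obtain rfl : i = j := hG _ _ (by simpa using he)
    exact ⟨⟨i, s(u, v)⟩, by simpa using he, rfl⟩
  · rintro ⟨i, ⟨u, v⟩⟩ -
    rfl

theorem density_sigma (G : SimpleGraph (Σ i, κ i)) (hG : ∀ x y, G.Adj x y → x.1 = y.1)
    (w : ℝ → ℝ → ℝ) :
    density G w = ∏ i, density (G.comap (Sigma.mk i)) w := by
  have : IsProbabilityMeasure (volume.restrict (Set.Icc (0:ℝ) 1)) := ⟨by simp⟩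
  simp_rw [density_eq_integral_pi, edgeProd_sigma G hG]
  exact integral_pi_sigma_prod _ fun i y => edgeProd (G.comap (Sigma.mk i)) fun u v => w (y u) (y v)

end Sigma

section Crossing

variable {p m : ℕ}

theorem Crosses.mono {B₁ B₂ A₁ A₂ : Finset (Fin p)} (h : Crosses B₁ B₂) (h₁ : B₁ ⊆ A₁)
    (h₂ : B₂ ⊆ A₂) : Crosses A₁ A₂ := by
  obtain ⟨i, k, j, l, hik, hkj, hjl, ⟨hi, hj, hk, hl⟩ | ⟨hi, hj, hk, hl⟩⟩ := h
  · exact ⟨i, k, j, l, hik, hkj, hjl, Or.inl ⟨h₁ hi, h₁ hj, h₂ hk, h₂ hl⟩⟩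
  · exact ⟨i, k, j, l, hik, hkj, hjl, Or.inr ⟨h₂ hi, h₂ hj, h₁ hk, h₁ hl⟩⟩

theorem crosses_map_iff (f : Fin m ↪o Fin p) {b₁ b₂ : Finset (Fin m)} :
    Crosses (b₁.map f.toEmbedding) (b₂.map f.toEmbedding) ↔ Crosses b₁ b₂ := by
  constructor
  · rintro ⟨_, _, _, _, hik, hkj, hjl, h⟩
    simp only [Finset.mem_map, RelEmbedding.coe_toEmbedding] at h
    obtain ⟨⟨i, hi, rfl⟩, ⟨j, hj, rfl⟩, ⟨k, hk, rfl⟩, ⟨l, hl, rfl⟩⟩ |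
      ⟨⟨i, hi, rfl⟩, ⟨j, hj, rfl⟩, ⟨k, hk, rfl⟩, ⟨l, hl, rfl⟩⟩ := h
    · exact ⟨i, k, j, l, f.lt_iff_lt.1 hik, f.lt_iff_lt.1 hkj, f.lt_iff_lt.1 hjl,
        Or.inl ⟨hi, hj, hk, hl⟩⟩
    · exact ⟨i, k, j, l, f.lt_iff_lt.1 hik, f.lt_iff_lt.1 hkj, f.lt_iff_lt.1 hjl,
        Or.inr ⟨hi, hj, hk, hl⟩⟩
  · rintro ⟨i, k, j, l, hik, hkj, hjl, h⟩
    refine ⟨f i, f k, f j, f l, f.lt_iff_lt.2 hik, f.lt_iff_lt.2 hkj, f.lt_iff_lt.2 hjl, ?_⟩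
    simpa only [Finset.mem_map, RelEmbedding.coe_toEmbedding, f.injective.eq_iff,
      exists_eq_right] using h

theorem crosses_of_mem_between {B B' : Finset (Fin p)} {c d a b : Fin p} (hc : c ∈ B')
    (hd : d ∈ B') (ha : a ∈ B) (hb : b ∈ B) (hca : c < a) (had : a < d) (hb' : b < c ∨ d < b) :
    Crosses B B' := by
  rcases hb' with hb' | hb'
  · exact ⟨b, c, a, d, hb', hca, had, Or.inl ⟨hb, ha, hc, hd⟩⟩
  · exact ⟨c, a, d, b, hca, had, hb', Or.inr ⟨hc, hd, ha, hb⟩⟩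

theorem not_crosses_of_inside_of_outside {B B' : Finset (Fin p)} {c d : Fin p}
    (hB : ∀ x ∈ B, c < x ∧ x < d) (hB' : ∀ x ∈ B', x < c ∨ d < x) : ¬ Crosses B B' := by
  rintro ⟨i, k, j, l, hik, hkj, hjl, ⟨hi, hj, hk, hl⟩ | ⟨hi, hj, hk, hl⟩⟩
  · have := hB i hi; have := hB j hj
    rcases hB' k hk with h | h <;> order
  · have := hB k hk; have := hB l hl
    rcases hB' i hi with h | h <;> rcases hB' j hj with h' | h' <;> order

end Crossing

section Components

variable {p : ℕ} {P : Finset (Finset (Fin p))}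

theorem IsPartition.eq_of_mem (hP : IsPartition P) {B B' : Finset (Fin p)} (hB : B ∈ P)
    (hB' : B' ∈ P) {x : Fin p} (hx : x ∈ B) (hx' : x ∈ B') : B = B' :=
  (hP.2 x).unique ⟨hB, hx⟩ ⟨hB', hx'⟩

theorem isPairPartition_iff : IsPairPartition P ↔ IsPartition P ∧ ∀ B ∈ P, B.card = 2 :=
  ⟨fun h => ⟨⟨fun B hB => Finset.card_pos.1 (by rw [h.1 B hB]; norm_num), h.2⟩, h.1⟩,
    fun h => ⟨h.2, h.1.2⟩⟩

theorem mem_pairPartitions :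
    P ∈ pairPartitions p ↔ IsPairPartition P := by
  simp [pairPartitions]

noncomputable def componentUnion (C : (interGraph P).ConnectedComponent) : Finset (Fin p) :=
  Finset.univ.filter fun x =>
    ∃ B : {B // B ∈ P}, (interGraph P).connectedComponentMk B = C ∧ x ∈ B.1

theorem mem_componentUnion {C : (interGraph P).ConnectedComponent} {x : Fin p} :
    x ∈ componentUnion C ↔
      ∃ B : {B // B ∈ P}, (interGraph P).connectedComponentMk B = C ∧ x ∈ B.1 := by
  simp [componentUnion]

theorem subset_componentUnion (B : {B // B ∈ P}) :
    B.1 ⊆ componentUnion ((interGraph P).connectedComponentMk B) :=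
  fun _ hx => mem_componentUnion.2 ⟨B, rfl, hx⟩

theorem IsPartition.mem_componentUnion_iff (hP : IsPartition P)
    {C : (interGraph P).ConnectedComponent} {B : {B // B ∈ P}} {x : Fin p} (hx : x ∈ B.1) :
    x ∈ componentUnion C ↔ (interGraph P).connectedComponentMk B = C := by
  refine ⟨fun h => ?_, fun h => h ▸ subset_componentUnion B hx⟩
  obtain ⟨B', rfl, hx'⟩ := mem_componentUnion.1 h
  rw [Subtype.ext (hP.eq_of_mem B.2 B'.2 hx hx')]

noncomputable def ncClosure (P : Finset (Finset (Fin p))) : Finset (Finset (Fin p)) :=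
  Finset.univ.image (componentUnion (P := P))

theorem mem_ncClosure {A : Finset (Fin p)} :
    A ∈ ncClosure P ↔ ∃ C : (interGraph P).ConnectedComponent, componentUnion C = A := by
  simp [ncClosure]

theorem isPartition_ncClosure (hP : IsPartition P) : IsPartition (ncClosure P) := by
  refine ⟨fun A hA => ?_, fun x => ?_⟩
  · obtain ⟨C, rfl⟩ := mem_ncClosure.1 hA
    induction C using SimpleGraph.ConnectedComponent.ind with | h B =>
    exact (hP.1 B.1 B.2).mono (subset_componentUnion B)
  · obtain ⟨B, ⟨hB, hx⟩, -⟩ := hP.2 x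
    refine ⟨_, ⟨mem_ncClosure.2 ⟨_, rfl⟩, subset_componentUnion ⟨B, hB⟩ hx⟩, ?_⟩
    rintro A ⟨hA, hxA⟩
    obtain ⟨C, rfl⟩ := mem_ncClosure.1 hA
    rw [(hP.mem_componentUnion_iff (B := ⟨B, hB⟩) hx).1 hxA]

theorem exists_straddling_block {C : (interGraph P).ConnectedComponent} {c d : Fin p}
    (havoid : ∀ B : {B // B ∈ P}, (interGraph P).connectedComponentMk B = C → c ∉ B.1 ∧ d ∉ B.1)
    {B₁ B₂ : {B // B ∈ P}} (h₁ : (interGraph P).connectedComponentMk B₁ = C)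
    (h₂ : (interGraph P).connectedComponentMk B₂ = C) {x y : Fin p} (hx : x ∈ B₁.1)
    (hxcd : c < x ∧ x < d) (hy : y ∈ B₂.1) (hycd : y < c ∨ d < y) :
    ∃ B : {B // B ∈ P}, (interGraph P).connectedComponentMk B = C ∧
      (∃ a ∈ B.1, c < a ∧ a < d) ∧ ∃ b ∈ B.1, b < c ∨ d < b := by
  by_contra hcon
  have hsplit : ∀ B : {B // B ∈ P}, (interGraph P).connectedComponentMk B = C →
      (∀ z ∈ B.1, c < z ∧ z < d) ∨ ∀ z ∈ B.1, z < c ∨ d < z := by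
    intro B hB
    have hcases : ∀ z ∈ B.1, (c < z ∧ z < d) ∨ (z < c ∨ d < z) := by
      intro z hz
      obtain ⟨hc, hd⟩ := havoid B hB
      have : z ≠ c := fun h => hc (h ▸ hz)
      have : z ≠ d := fun h => hd (h ▸ hz)
      omega
    by_cases hin : ∃ a ∈ B.1, c < a ∧ a < d
    · exact .inl fun z hz => (hcases z hz).resolve_right fun hout => hcon ⟨B, hB, hin, z, hz, hout⟩
    · exact .inr fun z hz => (hcases z hz).resolve_left fun h => hin ⟨z, hz, h⟩
  have hB₁ : ∀ z ∈ B₁.1, c < z ∧ z < d :=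
    (hsplit B₁ h₁).resolve_right fun hout => by have := hout x hx; omega
  -- An inside block cannot cross an outside one, so insideness spreads through the component.
  obtain ⟨-, hB₂⟩ := (SimpleGraph.ConnectedComponent.exact (h₁.trans h₂.symm)).of_adj_imp
    (Q := fun B => (interGraph P).connectedComponentMk B = C ∧ ∀ z ∈ B.1, c < z ∧ z < d)
    (fun u v huv ⟨hu, hin⟩ => by
      have hv := (SimpleGraph.ConnectedComponent.connectedComponentMk_eq_of_adj huv).symm.trans hu
      refine ⟨hv, (hsplit v hv).resolve_right fun hout => ?_⟩
      exact not_crosses_of_inside_of_outside hin hout huv.2)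
    ⟨h₁, hB₁⟩
  have := hB₂ y hy
  omega

theorem IsPartition.not_interleaved_componentUnion (hP : IsPartition P)
    {C₁ C₂ : (interGraph P).ConnectedComponent} (hne : C₁ ≠ C₂) {i k j l : Fin p}
    (hik : i < k) (hkj : k < j) (hjl : j < l) (hi : i ∈ componentUnion C₁)
    (hj : j ∈ componentUnion C₁) (hk : k ∈ componentUnion C₂) (hl : l ∈ componentUnion C₂) :
    False := by
  have havoid : ∀ {C C' : (interGraph P).ConnectedComponent}, C ≠ C' → ∀ {z : Fin p},
      z ∈ componentUnion C → ∀ B : {B // B ∈ P}, (interGraph P).connectedComponentMk B = C' →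
        z ∉ B.1 :=
    fun hCC' _ hz B hB hzB => hCC' (((hP.mem_componentUnion_iff hzB).1 hz).symm.trans hB)
  obtain ⟨Bi, hBi, hiB⟩ := mem_componentUnion.1 hi
  obtain ⟨Bj, hBj, hjB⟩ := mem_componentUnion.1 hj
  obtain ⟨Bk, hBk, hkB⟩ := mem_componentUnion.1 hk
  obtain ⟨Bl, hBl, hlB⟩ := mem_componentUnion.1 hl
  -- A block `B'` of `C₂` straddles `(i, j)`; then a block of `C₁` straddles the two points of
  -- `B'` found there, and so crosses `B'`.
  obtain ⟨B', hB', ⟨x, hx, hix, hxj⟩, y, hy, hy'⟩ := exists_straddling_block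
    (fun B hB => ⟨havoid hne hi B hB, havoid hne hj B hB⟩) hBk hBl hkB ⟨hik, hkj⟩ hlB (.inr hjl)
  have hxy : ∀ B : {B // B ∈ P}, (interGraph P).connectedComponentMk B = C₁ → x ∉ B.1 ∧ y ∉ B.1 :=
    fun B hB => ⟨havoid hne.symm ((hP.mem_componentUnion_iff hx).2 hB') B hB,
      havoid hne.symm ((hP.mem_componentUnion_iff hy).2 hB') B hB⟩
  have hcross : ∀ B : {B // B ∈ P}, (interGraph P).connectedComponentMk B = C₁ →
      ¬ Crosses B.1 B'.1 := by
    intro B hB hcr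
    rcases eq_or_ne B B' with rfl | hBB'
    · exact hne (hB.symm.trans hB')
    · exact hne (hB.symm.trans
        ((SimpleGraph.ConnectedComponent.connectedComponentMk_eq_of_adj
        (show (interGraph P).Adj B B' from ⟨hBB', hcr⟩)).trans hB'))
  rcases hy' with hyi | hjy
  · obtain ⟨B, hB, ⟨a, ha, hya, hax⟩, b, hb, hb'⟩ := exists_straddling_block
      (fun B hB => (hxy B hB).symm) hBi hBj hiB ⟨hyi, hix⟩ hjB (.inr hxj)
    exact hcross B hB (crosses_of_mem_between hy hx ha hb hya hax hb')
  · obtain ⟨B, hB, ⟨a, ha, hxa, hay⟩, b, hb, hb'⟩ := exists_straddling_block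
      hxy hBj hBi hjB ⟨hxj, hjy⟩ hiB (.inl hix)
    exact hcross B hB (crosses_of_mem_between hx hy ha hb hxa hay hb')

theorem isNoncrossing_ncClosure (hP : IsPartition P) :
    IsNoncrossing (ncClosure P) := by
  intro A₁ hA₁ A₂ hA₂ hne hcr
  obtain ⟨C₁, rfl⟩ := mem_ncClosure.1 hA₁
  obtain ⟨C₂, rfl⟩ := mem_ncClosure.1 hA₂
  have hC : C₁ ≠ C₂ := fun h => hne (h ▸ rfl)
  obtain ⟨i, k, j, l, hik, hkj, hjl, ⟨hi, hj, hk, hl⟩ | ⟨hi, hj, hk, hl⟩⟩ := hcr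
  · exact hP.not_interleaved_componentUnion hC hik hkj hjl hi hj hk hl
  · exact hP.not_interleaved_componentUnion hC.symm hik hkj hjl hi hj hk hl

end Components

section Blocks

variable {p : ℕ}

noncomputable def embedBlock (A : Finset (Fin p)) (b : Finset (Fin A.card)) : Finset (Fin p) :=
  b.map (A.orderEmbOfFin rfl).toEmbedding

noncomputable def pullbackBlock (A B : Finset (Fin p)) : Finset (Fin A.card) :=
  Finset.univ.filter fun i => A.orderEmbOfFin rfl i ∈ B

variable {A : Finset (Fin p)}

theorem embedBlock_subset (b : Finset (Fin A.card)) : embedBlock A b ⊆ A := by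
  intro x hx
  obtain ⟨i, -, rfl⟩ := Finset.mem_map.1 hx
  exact A.orderEmbOfFin_mem rfl i

theorem embedBlock_injective : Function.Injective (embedBlock A) :=
  Finset.map_injective _

theorem card_embedBlock (b : Finset (Fin A.card)) : (embedBlock A b).card = b.card :=
  Finset.card_map _

theorem orderEmbOfFin_mem_embedBlock {b : Finset (Fin A.card)} {i : Fin A.card} :
    A.orderEmbOfFin rfl i ∈ embedBlock A b ↔ i ∈ b :=
  Finset.mem_map' _

theorem exists_orderEmbOfFin_eq {x : Fin p} (hx : x ∈ A) : ∃ i, A.orderEmbOfFin rfl i = x := by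
  rw [← Set.mem_range, Finset.range_orderEmbOfFin]
  exact hx

theorem embedBlock_pullbackBlock {B : Finset (Fin p)} (h : B ⊆ A) :
    embedBlock A (pullbackBlock A B) = B := by
  ext x
  simp only [embedBlock, pullbackBlock, Finset.mem_map, Finset.mem_filter, Finset.mem_univ,
    true_and, RelEmbedding.coe_toEmbedding]
  refine ⟨fun ⟨i, hi, hix⟩ => hix ▸ hi, fun hx => ?_⟩
  obtain ⟨i, rfl⟩ := exists_orderEmbOfFin_eq (h hx)
  exact ⟨i, hx, rfl⟩

theorem pullbackBlock_embedBlock (b : Finset (Fin A.card)) :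
    pullbackBlock A (embedBlock A b) = b := by
  ext i
  simp [pullbackBlock, orderEmbOfFin_mem_embedBlock]

theorem crosses_embedBlock_iff {b₁ b₂ : Finset (Fin A.card)} :
    Crosses (embedBlock A b₁) (embedBlock A b₂) ↔ Crosses b₁ b₂ :=
  crosses_map_iff _

end Blocks

section Restriction

variable {p : ℕ} {P : Finset (Finset (Fin p))}

noncomputable def restrictToBlock (P : Finset (Finset (Fin p))) (A : Finset (Fin p)) :
    Finset (Finset (Fin A.card)) :=
  Finset.univ.filter fun b => embedBlock A b ∈ P

theorem mem_restrictToBlock {A : Finset (Fin p)} {b : Finset (Fin A.card)} :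
    b ∈ restrictToBlock P A ↔ embedBlock A b ∈ P := by
  simp [restrictToBlock]

theorem isPartition_restrictToBlock (hP : IsPartition P) {A : Finset (Fin p)}
    (hA : ∀ B ∈ P, ∀ x ∈ B, x ∈ A → B ⊆ A) : IsPartition (restrictToBlock P A) := by
  refine ⟨fun b hb => ?_, fun i => ?_⟩
  · simpa [embedBlock] using hP.1 _ (mem_restrictToBlock.1 hb)
  · obtain ⟨B, ⟨hB, hiB⟩, -⟩ := hP.2 (A.orderEmbOfFin rfl i)
    have hBA : B ⊆ A := hA B hB _ hiB (A.orderEmbOfFin_mem rfl i)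
    refine ⟨pullbackBlock A B, ⟨mem_restrictToBlock.2 ?_, ?_⟩, fun b ⟨hb, hib⟩ => ?_⟩
    · rwa [embedBlock_pullbackBlock hBA]
    · rwa [← orderEmbOfFin_mem_embedBlock, embedBlock_pullbackBlock hBA]
    · apply embedBlock_injective
      rw [embedBlock_pullbackBlock hBA]
      exact hP.eq_of_mem (mem_restrictToBlock.1 hb) hB (orderEmbOfFin_mem_embedBlock.2 hib) hiB

theorem isPairPartition_restrictToBlock (hP : IsPairPartition P) {A : Finset (Fin p)}
    (hA : ∀ B ∈ P, ∀ x ∈ B, x ∈ A → B ⊆ A) : IsPairPartition (restrictToBlock P A) := by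
  rw [isPairPartition_iff] at hP ⊢
  refine ⟨isPartition_restrictToBlock hP.1 hA, fun b hb => ?_⟩
  rw [← card_embedBlock]
  exact hP.2 _ (mem_restrictToBlock.1 hb)

theorem IsPartition.subset_componentUnion_of_mem (hP : IsPartition P)
    (C : (interGraph P).ConnectedComponent) :
    ∀ B ∈ P, ∀ x ∈ B, x ∈ componentUnion C → B ⊆ componentUnion C := by
  intro B hB x hxB hx
  rw [← (hP.mem_componentUnion_iff (B := ⟨B, hB⟩) hxB).1 hx]
  exact subset_componentUnion ⟨B, hB⟩

theorem connected_restrictToBlock_componentUnion (hP : IsPartition P)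
    (C : (interGraph P).ConnectedComponent) :
    (interGraph (restrictToBlock P (componentUnion C))).Connected := by
  set A := componentUnion C
  have hsub : ∀ B : C, B.1.1 ⊆ A := fun B => by
    simpa only [show (interGraph P).connectedComponentMk B.1 = C from B.2] using
      subset_componentUnion B.1
  let f : C.toSimpleGraph →g interGraph (restrictToBlock P A) :=
    { toFun := fun B => ⟨pullbackBlock A B.1.1,
        mem_restrictToBlock.2 ((embedBlock_pullbackBlock (hsub B)).symm ▸ B.1.2)⟩
      map_rel' := fun {B B'} hadj => by
        obtain ⟨hne, hcr⟩ : B.1 ≠ B'.1 ∧ Crosses B.1.1 B'.1.1 := hadj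
        refine ⟨fun h => hne (Subtype.ext ?_), ?_⟩
        · rw [← embedBlock_pullbackBlock (hsub B), ← embedBlock_pullbackBlock (hsub B')]
          exact congrArg (embedBlock A ∘ Subtype.val) h
        · rwa [← crosses_embedBlock_iff, embedBlock_pullbackBlock (hsub B),
            embedBlock_pullbackBlock (hsub B')] }
  refine C.connected_toSimpleGraph.map f fun b => ?_
  have hb := mem_restrictToBlock.1 b.2
  obtain ⟨x, hx⟩ := hP.1 _ hb
  refine ⟨⟨⟨_, hb⟩, (hP.mem_componentUnion_iff hx).1 (embedBlock_subset _ hx)⟩, ?_⟩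
  exact Subtype.ext (pullbackBlock_embedBlock b.1)

end Restriction

section Glue

variable {p : ℕ} {σ : Finset (Finset (Fin p))} {q : ∀ A ∈ σ, Finset (Finset (Fin A.card))}

noncomputable def glue (σ : Finset (Finset (Fin p))) (q : ∀ A ∈ σ, Finset (Finset (Fin A.card))) :
    Finset (Finset (Fin p)) :=
  σ.attach.biUnion fun A => (q A.1 A.2).image (embedBlock A.1)

theorem mem_glue {B : Finset (Fin p)} :
    B ∈ glue σ q ↔ ∃ A : {A // A ∈ σ}, ∃ b ∈ q A.1 A.2, embedBlock A.1 b = B := by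
  simp [glue]

theorem IsPartition.eq_of_embedBlock_eq (hσ : IsPartition σ) {A A' : Finset (Fin p)} (hA : A ∈ σ)
    (hA' : A' ∈ σ) {b : Finset (Fin A.card)} {b' : Finset (Fin A'.card)} (hb : b.Nonempty)
    (h : embedBlock A b = embedBlock A' b') : A = A' := by
  obtain ⟨x, hx⟩ := hb.map (f := (A.orderEmbOfFin rfl).toEmbedding)
  exact hσ.eq_of_mem hA hA' (embedBlock_subset b hx) (embedBlock_subset b' (h ▸ hx))

theorem isPartition_glue (hσ : IsPartition σ) (hq : ∀ A hA, IsPartition (q A hA)) :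
    IsPartition (glue σ q) := by
  refine ⟨fun B hB => ?_, fun x => ?_⟩
  · obtain ⟨A, b, hb, rfl⟩ := mem_glue.1 hB
    exact ((hq A.1 A.2).1 b hb).map
  · obtain ⟨A, ⟨hA, hxA⟩, -⟩ := hσ.2 x
    obtain ⟨i, rfl⟩ := exists_orderEmbOfFin_eq hxA
    obtain ⟨b, ⟨hb, hib⟩, hbu⟩ := (hq A hA).2 i
    refine ⟨embedBlock A b, ⟨mem_glue.2 ⟨⟨A, hA⟩, b, hb, rfl⟩,
      orderEmbOfFin_mem_embedBlock.2 hib⟩, ?_⟩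
    rintro _ ⟨hB, hiB⟩
    obtain ⟨⟨A', hA'⟩, b', hb', rfl⟩ := mem_glue.1 hB
    obtain rfl : A' = A := hσ.eq_of_mem hA' hA (embedBlock_subset b' hiB) hxA
    rw [hbu b' ⟨hb', orderEmbOfFin_mem_embedBlock.1 hiB⟩]

theorem isPairPartition_glue (hσ : IsPartition σ) (hq : ∀ A hA, IsPairPartition (q A hA)) :
    IsPairPartition (glue σ q) := by
  simp only [isPairPartition_iff] at hq ⊢
  refine ⟨isPartition_glue hσ fun A hA => (hq A hA).1, fun B hB => ?_⟩
  obtain ⟨A, b, hb, rfl⟩ := mem_glue.1 hB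
  rw [card_embedBlock]
  exact (hq A.1 A.2).2 b hb

noncomputable def glueEquiv (hσ : IsPartition σ) (hq : ∀ A hA, IsPartition (q A hA)) :
    (Σ A : {A // A ∈ σ}, {b // b ∈ q A.1 A.2}) ≃ {B // B ∈ glue σ q} :=
  Equiv.ofBijective (fun x => ⟨embedBlock x.1.1 x.2.1, mem_glue.2 ⟨x.1, x.2.1, x.2.2, rfl⟩⟩)
    ⟨fun ⟨⟨A, hA⟩, b⟩ ⟨⟨A', hA'⟩, b'⟩ h => by
      have h : embedBlock A b.1 = embedBlock A' b'.1 := congrArg Subtype.val h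
      obtain rfl := hσ.eq_of_embedBlock_eq hA hA' ((hq A hA).1 b.1 b.2) h
      obtain rfl := Subtype.ext (embedBlock_injective h)
      rfl,
    fun B => by
      obtain ⟨A, b, hb, hB⟩ := mem_glue.1 B.2
      exact ⟨⟨A, b, hb⟩, Subtype.ext hB⟩⟩

theorem glueEquiv_apply (hσ : IsPartition σ) (hq : ∀ A hA, IsPartition (q A hA))
    (x : Σ A : {A // A ∈ σ}, {b // b ∈ q A.1 A.2}) :
    (glueEquiv hσ hq x).1 = embedBlock x.1.1 x.2.1 :=
  rfl

theorem comap_glueEquiv_sigmaMk (hσ : IsPartition σ) (hq : ∀ A hA, IsPartition (q A hA))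
    (A : {A // A ∈ σ}) :
    ((interGraph (glue σ q)).comap (glueEquiv hσ hq)).comap (Sigma.mk A) =
      interGraph (q A.1 A.2) := by
  ext b b'
  simp only [SimpleGraph.comap_adj, interGraph, ne_eq, Subtype.ext_iff, glueEquiv_apply,
    embedBlock_injective.eq_iff, crosses_embedBlock_iff]

theorem glueEquiv_adj_fst (hσ : IsPartition σ) (hnc : IsNoncrossing σ)
    (hq : ∀ A hA, IsPartition (q A hA)) {x y : Σ A : {A // A ∈ σ}, {b // b ∈ q A.1 A.2}}
    (h : ((interGraph (glue σ q)).comap (glueEquiv hσ hq)).Adj x y) : x.1 = y.1 := by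
  by_contra hne
  exact hnc _ x.1.2 _ y.1.2 (fun h => hne (Subtype.ext h))
    (h.2.mono (embedBlock_subset _) (embedBlock_subset _))

theorem density_glue (hσ : IsPartition σ) (hnc : IsNoncrossing σ)
    (hq : ∀ A hA, IsPartition (q A hA)) (w : ℝ → ℝ → ℝ) :
    density (interGraph (glue σ q)) w = ∏ A ∈ σ.attach, density (interGraph (q A.1 A.2)) w := by
  rw [← density_comap_equiv (glueEquiv hσ hq),
    density_sigma _ fun _ _ => glueEquiv_adj_fst hσ hnc hq]
  simp_rw [comap_glueEquiv_sigmaMk]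
  rfl

theorem componentUnion_glueEquiv (hσ : IsPartition σ) (hnc : IsNoncrossing σ)
    (hq : ∀ A hA, IsPartition (q A hA)) (hconn : ∀ A hA, (interGraph (q A hA)).Connected)
    (x : Σ A : {A // A ∈ σ}, {b // b ∈ q A.1 A.2}) :
    componentUnion ((interGraph (glue σ q)).connectedComponentMk (glueEquiv hσ hq x)) = x.1.1 := by
  have hreach : ∀ y, (interGraph (glue σ q)).Reachable (glueEquiv hσ hq y) (glueEquiv hσ hq x) ↔
      y.1 = x.1 := by
    intro y
    refine (SimpleGraph.Iso.reachable_iff (φ := SimpleGraph.Iso.comap (glueEquiv hσ hq) _)).trans ?_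
    refine reachable_sigma_iff _ (fun _ _ => glueEquiv_adj_fst hσ hnc hq) fun A => ?_
    rw [comap_glueEquiv_sigmaMk]
    exact hconn A.1 A.2
  ext z
  rw [mem_componentUnion]
  constructor
  · rintro ⟨B, hB, hzB⟩
    obtain ⟨y, rfl⟩ := (glueEquiv hσ hq).surjective B
    rw [← (hreach y).1 (SimpleGraph.ConnectedComponent.exact hB)]
    exact embedBlock_subset _ hzB
  · intro hz
    obtain ⟨i, rfl⟩ := exists_orderEmbOfFin_eq hz
    obtain ⟨b, ⟨hb, hib⟩, -⟩ := (hq x.1.1 x.1.2).2 i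
    exact ⟨glueEquiv hσ hq ⟨x.1, b, hb⟩,
      SimpleGraph.ConnectedComponent.sound ((hreach _).2 rfl),
      orderEmbOfFin_mem_embedBlock.2 hib⟩

theorem ncClosure_glue (hσ : IsPartition σ) (hnc : IsNoncrossing σ)
    (hq : ∀ A hA, IsPartition (q A hA)) (hconn : ∀ A hA, (interGraph (q A hA)).Connected) :
    ncClosure (glue σ q) = σ := by
  ext A
  rw [mem_ncClosure]
  constructor
  · rintro ⟨C, rfl⟩
    induction C using SimpleGraph.ConnectedComponent.ind with | h B =>
    obtain ⟨x, rfl⟩ := (glueEquiv hσ hq).surjective B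
    rw [componentUnion_glueEquiv hσ hnc hq hconn]
    exact x.1.2
  · intro hA
    obtain ⟨b⟩ := (hconn A hA).nonempty
    exact ⟨_, componentUnion_glueEquiv hσ hnc hq hconn ⟨⟨A, hA⟩, b⟩⟩

theorem restrictToBlock_glue (hσ : IsPartition σ) (hq : ∀ A hA, IsPartition (q A hA))
    {A : Finset (Fin p)} (hA : A ∈ σ) : restrictToBlock (glue σ q) A = q A hA := by
  ext b
  rw [mem_restrictToBlock, mem_glue]
  refine ⟨fun ⟨⟨A', hA'⟩, b', hb', h⟩ => ?_, fun hb => ⟨⟨A, hA⟩, b, hb, rfl⟩⟩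
  obtain rfl := hσ.eq_of_embedBlock_eq hA' hA ((hq A' hA').1 b' hb') h
  rwa [← embedBlock_injective h]

theorem glue_restrictToBlock {P : Finset (Finset (Fin p))} :
    glue (ncClosure P) (fun A _ => restrictToBlock P A) = P := by
  ext B
  rw [mem_glue]
  refine ⟨fun ⟨A, b, hb, h⟩ => h ▸ mem_restrictToBlock.1 hb, fun hB => ?_⟩
  have hsub := subset_componentUnion (⟨B, hB⟩ : {B // B ∈ P})
  refine ⟨⟨_, mem_ncClosure.2 ⟨_, rfl⟩⟩, pullbackBlock _ B, ?_, embedBlock_pullbackBlock hsub⟩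
  rwa [mem_restrictToBlock, embedBlock_pullbackBlock hsub]

end Glue

theorem sum_density_of_ncClosure_eq {p : ℕ} {σ : Finset (Finset (Fin p))} (hσ : IsPartition σ)
    (hnc : IsNoncrossing σ) (w : ℝ → ℝ → ℝ) :
    ∑ P ∈ (pairPartitions p).filter (fun P => ncClosure P = σ), density (interGraph P) w =
      ∏ A ∈ σ, connectedPairMoment A.card w := by
  simp only [connectedPairMoment, Finset.prod_sum]
  symm
  have hpi : ∀ q ∈ σ.pi fun A => (pairPartitions A.card).filter fun Q => (interGraph Q).Connected,
      ∀ A hA, IsPartition (q A hA) ∧ IsPairPartition (q A hA) ∧ (interGraph (q A hA)).Connected :=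
    fun q hq A hA => by
      have := Finset.mem_pi.1 hq A hA
      rw [Finset.mem_filter, mem_pairPartitions] at this
      exact ⟨(isPairPartition_iff.1 this.1).1, this⟩
  refine Finset.sum_nbij' (glue σ) (fun P A _ => restrictToBlock P A) (fun q hq => ?_)
    (fun P hP => ?_) (fun q hq => ?_) (fun P hP => ?_) (fun q hq => ?_)
  · rw [Finset.mem_filter, mem_pairPartitions]
    exact ⟨isPairPartition_glue hσ fun A hA => (hpi q hq A hA).2.1,
      ncClosure_glue hσ hnc (fun A hA => (hpi q hq A hA).1) fun A hA => (hpi q hq A hA).2.2⟩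
  · obtain ⟨hpair, rfl⟩ := Finset.mem_filter.1 hP
    have hpair := mem_pairPartitions.1 hpair
    refine Finset.mem_pi.2 fun A hA => Finset.mem_filter.2 ⟨mem_pairPartitions.2 ?_, ?_⟩
    all_goals obtain ⟨C, rfl⟩ := mem_ncClosure.1 hA
    · exact isPairPartition_restrictToBlock hpair
        ((isPairPartition_iff.1 hpair).1.subset_componentUnion_of_mem C)
    · exact connected_restrictToBlock_componentUnion (isPairPartition_iff.1 hpair).1 C
  · funext A hA
    exact restrictToBlock_glue hσ (fun A hA => (hpi q hq A hA).1) hA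
  · obtain ⟨-, rfl⟩ := Finset.mem_filter.1 hP
    exact glue_restrictToBlock
  · exact (density_glue hσ hnc (fun A hA => (hpi q hq A hA).1) w).symm

theorem free_cumulants_of_graphon_moments_general
    (w : ℝ → ℝ → ℝ)
    (p : ℕ) :
    momentFormula p w =
      ∑ σ ∈ Finset.univ.filter
          (fun σ : Finset (Finset (Fin p)) => IsPartition σ ∧ IsNoncrossing σ),
        ∏ B ∈ σ, connectedPairMoment B.card w := by
  rw [momentFormula, ← Finset.sum_fiberwise_of_maps_to (g := ncClosure) fun P hP => ?_]
  · refine Finset.sum_congr rfl fun σ hσ => ?_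
    obtain ⟨-, hσ, hnc⟩ := Finset.mem_filter.1 hσ
    exact sum_density_of_ncClosure_eq hσ hnc w
  · have hP := (isPairPartition_iff.1 (mem_pairPartitions.1 hP)).1
    exact Finset.mem_filter.2 ⟨Finset.mem_univ _, isPartition_ncClosure hP,
      isNoncrossing_ncClosure hP⟩

/-- **Proposition 2.1 (free cumulants of `μ_w`).**  The moments `Σ_{π ∈ P₂(p)} ρ(f_π, w)` of
`μ_w` decompose over noncrossing partitions as
`Σ_{σ ∈ NC(p)} ∏_{V ∈ σ} κ_{|V|}(w)`, i.e. the `κ_m(w)` are the free cumulants of `μ_w`. -/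
theorem free_cumulants_of_graphon_moments
    (w : ℝ → ℝ → ℝ)
    (hw_meas : Measurable (Function.uncurry w))
    (hw_symm : ∀ x y : ℝ, w x y = w y x)
    (hw_mem : ∀ x y : ℝ, w x y ∈ Set.Icc (0:ℝ) 1)
    (p : ℕ) :
    momentFormula p w =
      ∑ σ ∈ Finset.univ.filter
          (fun σ : Finset (Finset (Fin p)) => IsPartition σ ∧ IsNoncrossing σ),
        ∏ B ∈ σ, connectedPairMoment B.card w :=
  free_cumulants_of_graphon_moments_general w p

end EpsCLT
end

section
/- Let f be a connected finite simple graph with k ≥ 1 vertices and let g be a finite simple graph with n vertices and maximum degree Δ. Then hom(f, g) ≤ n · Δ^{k−1}, where hom(f, g) is the number of graph homomorphisms from f to g. -/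
open MeasureTheory Filter Topology
open scoped Classical

namespace EpsCLT

/-!
Remove a vertex `v` of `f` whose deletion leaves `f` connected (a leaf of a spanning tree) and
pick a neighbour `u` of `v`. A homomorphism is its restriction to `f - v` plus the image of `v`,
which must be one of the at most `Δ` neighbours of the image of `u`; induct on the number of
vertices.
-/

open Finset

theorem homCount_le_card_pow {V W : Type*} [Fintype V] [Fintype W] (f : SimpleGraph V)
    (g : SimpleGraph W) : homCount f g ≤ Fintype.card W ^ Fintype.card V := by
  simpa [homCount] using (homFinset f g).card_le_univ

section DeleteVertex

variable {V W : Type*} [Fintype V] [Fintype W] {f : SimpleGraph V} (g : SimpleGraph W) {u v : V}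

theorem domRestrict_compl_singleton_mem_homFinset_induce {φ : V → W} (hφ : φ ∈ homFinset f g) :
    ({v}ᶜ : Set V).domRestrict φ ∈ homFinset (f.induce {v}ᶜ) g := by
  simp only [homFinset, mem_filter, mem_univ, true_and] at hφ ⊢
  exact fun a b hab => hφ a b hab

theorem card_filter_domRestrict_homFinset_le_maxDegree (huv : f.Adj u v)
    (ψ : ({v}ᶜ : Set V) → W) :
    #{φ ∈ homFinset f g | ({v}ᶜ : Set V).domRestrict φ = ψ} ≤ g.maxDegree := by
  have hu : u ∈ ({v}ᶜ : Set V) := huv.ne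
  calc #{φ ∈ homFinset f g | ({v}ᶜ : Set V).domRestrict φ = ψ}
      ≤ #(g.neighborFinset (ψ ⟨u, hu⟩)) := by
        refine card_le_card_of_injOn (fun φ => φ v) ?_ ?_
        · intro φ hφ
          simp only [coe_filter, homFinset, mem_filter, mem_univ, true_and, Set.mem_ofPred_eq] at hφ
          obtain ⟨hhom, rfl⟩ := hφ
          exact (g.mem_neighborFinset _ _).2 (hhom u v huv)
        · intro φ₁ hφ₁ φ₂ hφ₂ (hv : φ₁ v = φ₂ v)
          simp only [coe_filter, Set.mem_ofPred_eq] at hφ₁ hφ₂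
          funext w
          by_cases hw : w = v
          · rwa [hw]
          · exact congrFun (hφ₁.2.trans hφ₂.2.symm) ⟨w, hw⟩
    _ = g.degree (ψ ⟨u, hu⟩) := g.card_neighborFinset_eq_degree _
    _ ≤ g.maxDegree := g.degree_le_maxDegree _

theorem homCount_le_homCount_induce_compl_singleton_mul_maxDegree (huv : f.Adj u v) :
    homCount f g ≤ homCount (f.induce {v}ᶜ) g * g.maxDegree := by
  rw [homCount, homCount, mul_comm]
  exact card_le_mul_card_image_of_maps_to
    (fun _ => domRestrict_compl_singleton_mem_homFinset_induce g) _
    (fun ψ _ => card_filter_domRestrict_homFinset_le_maxDegree g huv ψ)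

end DeleteVertex

/-- If `f` is connected with `k` vertices and `g` has `n` vertices and maximum degree `Δ`, then
`hom(f, g) ≤ n · Δ^(k-1)`. -/
theorem homCount_le_card_mul_maxDegree_pow
    {V W : Type*} [Fintype V] [Fintype W]
    (f : SimpleGraph V) (g : SimpleGraph W) (hconn : f.Connected) :
    homCount f g ≤ Fintype.card W * g.maxDegree ^ (Fintype.card V - 1) := by
  induction hk : Fintype.card V generalizing V with
  | zero => exact absurd hk (Fintype.card_pos_iff.2 hconn.nonempty).ne'
  | succ k ih =>
    rcases k with _ | k
    · simpa [hk] using homCount_le_card_pow f g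
    have : Nontrivial V := Fintype.one_lt_card_iff_nontrivial.mp (by omega)
    obtain ⟨v, hv⟩ := hconn.exists_connected_induce_compl_singleton_of_finite_nontrivial
    obtain ⟨u, hvu⟩ := hconn.preconnected.exists_adj_of_nontrivial v
    have hcard : Fintype.card ({v}ᶜ : Set V) = k + 1 := by
      rw [Fintype.card_compl_set]; simp [hk]
    calc homCount f g ≤ homCount (f.induce {v}ᶜ) g * g.maxDegree :=
          homCount_le_homCount_induce_compl_singleton_mul_maxDegree g hvu.symm
      _ ≤ Fintype.card W * g.maxDegree ^ k * g.maxDegree := by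
          gcongr; simpa using ih _ hv hcard
      _ = Fintype.card W * g.maxDegree ^ (k + 1 + 1 - 1) := by rw [mul_assoc, ← pow_succ]; rfl

end EpsCLT
end
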